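/- arXiv:1205.0092 — 12 statements merged into one kernel-verified Lean document; each statement's English description precedes it below -/
import Mathlib

section
/- For θ₁ > 0, θ₂ > 0, b > 0 and a + b > 0, the integral of (au+b)^{-(θ₁+θ₂)} against the Beta(θ₁,θ₂) distribution on [0,1] equals (a+b)^{-θ₁} b^{-θ₂}. -/
/-! The substitution `u = b t / (a + b - a t)` is a Möbius bijection of `(0, 1)` onto itself, with
inverse `u ↦ (a + b) u / (a u + b)` of the same shape. With `D = a + b - a t` one has `1 - u =
(a + b)(1 - t) / D`, `a u + b = b (a + b) / D` and `du = b (a + b) / D² dt`, so after the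
substitution the powers of `D` cancel and the integrand becomes `(a + b)^(-θ₁) b^(-θ₂)` times the
Beta density in `t`, whose integral is `1`. -/

open MeasureTheory

/-- Beta(a,b) density on [0,1]. -/
noncomputable def betaDensity (a b u : ℝ) : ℝ :=
  Real.Gamma (a + b) / (Real.Gamma a * Real.Gamma b) * u ^ (a - 1) * (1 - u) ^ (b - 1)

open Set

theorem integral_betaDensity_Ioo {α β : ℝ} (hα : 0 < α) (hβ : 0 < β) :
    ∫ u in Ioo (0:ℝ) 1, betaDensity α β u = 1 := by
  have h := ProbabilityTheory.lintegral_betaPDF_eq_one hα hβ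
  rw [ProbabilityTheory.lintegral_betaPDF] at h
  have hdens : ∀ u, betaDensity α β u
      = 1 / ProbabilityTheory.beta α β * u ^ (α - 1) * (1 - u) ^ (β - 1) := fun u => by
    rw [betaDensity, ProbabilityTheory.beta, one_div_div]
  simp_rw [hdens]
  rw [integral_eq_lintegral_of_nonneg_ae, h, ENNReal.toReal_one]
  · refine ae_restrict_of_forall_mem measurableSet_Ioo fun u hu => ?_
    have := ProbabilityTheory.beta_pos hα hβ
    have := hu.1
    have := sub_pos.2 hu.2
    show 0 ≤ 1 / ProbabilityTheory.beta α β * u ^ (α - 1) * (1 - u) ^ (β - 1)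
    positivity
  · exact Measurable.aestronglyMeasurable (by fun_prop)

noncomputable def mobius (a b t : ℝ) : ℝ := b * t / (a + b - a * t)

section mobius

variable {a b t : ℝ}

theorem hasDerivAt_mobius (ht : a + b - a * t ≠ 0) :
    HasDerivAt (mobius a b) (b * (a + b) / (a + b - a * t) ^ 2) t := by
  have hnum : HasDerivAt (fun t => b * t) b t := by
    simpa using (hasDerivAt_id t).const_mul b
  have hden : HasDerivAt (fun t => a + b - a * t) (-a) t := by
    simpa using ((hasDerivAt_id t).const_mul a).const_sub (a + b)
  exact (hnum.div hden ht).congr_deriv (by ring)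

theorem injOn_mobius (hb : b ≠ 0) (hab : a + b ≠ 0) :
    InjOn (mobius a b) {t | a + b - a * t ≠ 0} := by
  intro t₁ h₁ t₂ h₂ h
  rw [mobius, mobius, div_eq_div_iff h₁ h₂] at h
  have : b * (a + b) * (t₁ - t₂) = 0 := by linear_combination h
  simpa [hb, hab, sub_eq_zero] using this

theorem mobius_denom_pos (hb : 0 < b) (hab : 0 < a + b) (ht : t ∈ Icc (0:ℝ) 1) :
    0 < a + b - a * t := by
  rcases le_total 0 a with ha | ha <;> nlinarith [ht.1, ht.2]

theorem mapsTo_mobius (hb : 0 < b) (hab : 0 < a + b) :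
    MapsTo (mobius a b) (Ioo 0 1) (Ioo 0 1) := fun t ht => by
  have hD := mobius_denom_pos hb hab (Ioo_subset_Icc_self ht)
  refine ⟨div_pos (mul_pos hb ht.1) hD, (div_lt_one hD).2 ?_⟩
  nlinarith [ht.1, ht.2]

theorem mobius_neg_mobius (ht : a + b - a * t ≠ 0) (hb : b ≠ 0) (hab : a + b ≠ 0) :
    mobius (-a) (a + b) (mobius a b t) = t := by
  have hden : -a + (a + b) - -a * mobius a b t = b * (a + b) / (a + b - a * t) := by
    rw [mobius]
    field_simp
    ring
  rw [mobius, hden, mobius]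
  field_simp

theorem image_mobius_Ioo (hb : 0 < b) (hab : 0 < a + b) :
    mobius a b '' Ioo 0 1 = Ioo 0 1 := by
  refine SurjOn.image_eq_of_mapsTo (fun u hu => ?_) (mapsTo_mobius hb hab)
  refine ⟨mobius (-a) (a + b) u, mapsTo_mobius hab (by simpa using hb) hu, ?_⟩
  have hab' : 0 < -a + (a + b) := by simpa using hb
  simpa using mobius_neg_mobius (mobius_denom_pos hab hab' (Ioo_subset_Icc_self hu)).ne'
    hab.ne' hab'.ne'

theorem one_sub_mobius (ht : a + b - a * t ≠ 0) :
    1 - mobius a b t = (a + b) * (1 - t) / (a + b - a * t) := by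
  rw [eq_div_iff ht, mobius, sub_mul, div_mul_cancel₀ _ ht]
  ring

theorem mul_mobius_add (ht : a + b - a * t ≠ 0) :
    a * mobius a b t + b = b * (a + b) / (a + b - a * t) := by
  rw [mobius]
  field_simp
  ring

theorem betaDensity_mobius {θ₁ θ₂ : ℝ} (hb : 0 < b) (hab : 0 < a + b) (ht : t ∈ Ioo (0:ℝ) 1) :
    |b * (a + b) / (a + b - a * t) ^ 2| •
        (betaDensity θ₁ θ₂ (mobius a b t) * (a * mobius a b t + b) ^ (-(θ₁ + θ₂)))
      = (a + b) ^ (-θ₁) * b ^ (-θ₂) * betaDensity θ₁ θ₂ t := by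
  have hD := mobius_denom_pos hb hab (Ioo_subset_Icc_self ht)
  have h₀ := ht.1
  have h₁ := sub_pos.2 ht.2
  have key : b * (a + b) / (a + b - a * t) ^ 2 * ((b * t / (a + b - a * t)) ^ (θ₁ - 1)
        * ((a + b) * (1 - t) / (a + b - a * t)) ^ (θ₂ - 1)
        * (b * (a + b) / (a + b - a * t)) ^ (-(θ₁ + θ₂)))
      = (a + b) ^ (-θ₁) * b ^ (-θ₂) * (t ^ (θ₁ - 1) * (1 - t) ^ (θ₂ - 1)) := by
    -- the exponents of `b`, `a + b` and `a + b - a t` add up to `-θ₂`, `-θ₁` and `0`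
    apply Real.log_injOn_pos (mem_Ioi.2 (by positivity)) (mem_Ioi.2 (by positivity))
    simp (disch := positivity) only [Real.log_mul, Real.log_div, Real.log_rpow, Real.log_pow]
    push_cast
    ring
  rw [abs_of_pos (by positivity), smul_eq_mul, betaDensity, betaDensity, one_sub_mobius hD.ne',
    mul_mobius_add hD.ne', mobius]
  linear_combination Real.Gamma (θ₁ + θ₂) / (Real.Gamma θ₁ * Real.Gamma θ₂) * key

end mobius

/-- One-dimensional Markov–Krein (Cifarelli–Regazzini) identity. -/
theorem stmt0 (θ₁ θ₂ a b : ℝ) (hθ₁ : 0 < θ₁) (hθ₂ : 0 < θ₂) (hb : 0 < b)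
    (hab : 0 < a + b) :
    ∫ u in Set.Icc (0:ℝ) 1, betaDensity θ₁ θ₂ u * (a * u + b) ^ (-(θ₁ + θ₂))
      = (a + b) ^ (-θ₁) * b ^ (-θ₂) := by
  have hD : ∀ t ∈ Ioo (0:ℝ) 1, a + b - a * t ≠ 0 := fun t ht =>
    (mobius_denom_pos hb hab (Ioo_subset_Icc_self ht)).ne'
  rw [integral_Icc_eq_integral_Ioo, ← image_mobius_Ioo hb hab,
    integral_image_eq_integral_abs_deriv_smul measurableSet_Ioo
      (fun t ht => (hasDerivAt_mobius (hD t ht)).hasDerivWithinAt)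
      ((injOn_mobius hb.ne' hab.ne').mono hD),
    setIntegral_congr_fun measurableSet_Ioo fun t ht => betaDensity_mobius hb hab ht,
    integral_const_mul, integral_betaDensity_Ioo hθ₁ hθ₂, mul_one]
end

section
/- Let 0 < α < 1, b > 0, a + b > 0, a' + b > 0 and a ≠ a'. Then ∫₀¹ B_{1-α,1+α}(du) / ((au+b)(a'u+b)) = [(a+b)^α − (a'+b)^α] / (α (a−a') b^{1+α}), where B_{1-α,1+α} is the Beta(1−α, 1+α) distribution. -/
/-!
Split `1 / ((a u + b) (a' u + b))` into partial fractions. Each piece reduces, after writing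
`a (1 - u) / (a u + b) = (a + b) / (a u + b) - 1`, to a Beta integral and to the integral of
`u ^ (s - 1) (1 - u) ^ (t - 1) / (a u + b) ^ (s + t)` with `s = 1 - α`, `t = α`. The Möbius
involution `v ↦ b (1 - v) / (a v + b)` of `(0, 1)` transforms the latter into
`B(t, s) / ((a + b) ^ s b ^ t)`.
-/

open MeasureTheory

open ProbabilityTheory Set

section BetaIntegral

variable {s t : ℝ}

lemma betaPDFReal_eq_indicator (s t : ℝ) :
    betaPDFReal s t
      = (Ioo 0 1).indicator fun x => (beta s t)⁻¹ * (x ^ (s - 1) * (1 - x) ^ (t - 1)) := by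
  ext x
  simp only [betaPDFReal, indicator, mem_Ioo, one_div, mul_assoc]

lemma toReal_betaPDF (hs : 0 < s) (ht : 0 < t) :
    (fun x => (betaPDF s t x).toReal) = betaPDFReal s t := by
  ext x
  refine ENNReal.toReal_ofReal ?_
  by_cases hx : 0 < x ∧ x < 1
  · exact (betaPDFReal_pos hx.1 hx.2 hs ht).le
  · simp [betaPDFReal, hx]

lemma aemeasurable_betaPDF : AEMeasurable (betaPDF s t) := by
  unfold betaPDF
  fun_prop

lemma lintegral_betaPDF_ne_top (hs : 0 < s) (ht : 0 < t) : ∫⁻ x, betaPDF s t x ≠ ⊤ := by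
  simp [lintegral_betaPDF_eq_one hs ht]

lemma integrableOn_rpow_mul_one_sub_rpow (hs : 0 < s) (ht : 0 < t) :
    IntegrableOn (fun x : ℝ => x ^ (s - 1) * (1 - x) ^ (t - 1)) (Ioo 0 1) := by
  have h := integrable_toReal_of_lintegral_ne_top aemeasurable_betaPDF
    (lintegral_betaPDF_ne_top hs ht)
  rw [toReal_betaPDF hs ht, betaPDFReal_eq_indicator, integrable_indicator_iff measurableSet_Ioo,
    IntegrableOn, integrable_const_mul_iff (inv_ne_zero (beta_pos hs ht).ne').isUnit] at h
  exact h

lemma integral_rpow_mul_one_sub_rpow (hs : 0 < s) (ht : 0 < t) :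
    ∫ x in Ioo 0 1, x ^ (s - 1) * (1 - x) ^ (t - 1) = beta s t := by
  have h := integral_toReal aemeasurable_betaPDF
    (ae_lt_top' aemeasurable_betaPDF (lintegral_betaPDF_ne_top hs ht))
  rw [toReal_betaPDF hs ht, lintegral_betaPDF_eq_one hs ht, betaPDFReal_eq_indicator,
    integral_indicator measurableSet_Ioo, integral_const_mul, ENNReal.toReal_one,
    inv_mul_eq_one₀ (beta_pos hs ht).ne'] at h
  exact h.symm

lemma integrableOn_rpow_mul_one_sub_rpow_mul (hs : 0 < s) (ht : 0 < t) {g : ℝ → ℝ}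
    (hg : ContinuousOn g (Icc 0 1)) :
    IntegrableOn (fun x : ℝ => x ^ (s - 1) * (1 - x) ^ (t - 1) * g x) (Ioo 0 1) :=
  ((integrableOn_Icc_iff_integrableOn_Ioo).mpr (integrableOn_rpow_mul_one_sub_rpow hs ht)
    |>.mul_continuousOn hg isCompact_Icc).mono_set Ioo_subset_Icc_self

end BetaIntegral

lemma mul_add_pos_of_mem_Icc {a b u : ℝ} (hb : 0 < b) (hab : 0 < a + b)
    (hu : u ∈ Icc (0 : ℝ) 1) :
    0 < a * u + b := by
  nlinarith [mul_nonneg hu.1 hab.le, mul_nonneg (sub_nonneg.mpr hu.2) hb.le]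

noncomputable def mobiusFlip (a b v : ℝ) : ℝ := b * (1 - v) / (a * v + b)

section MobiusFlip

variable {a b : ℝ}

lemma one_sub_mobiusFlip {v : ℝ} (hv : a * v + b ≠ 0) :
    1 - mobiusFlip a b v = v * (a + b) / (a * v + b) := by
  rw [mobiusFlip, eq_div_iff hv, sub_mul, div_mul_cancel₀ _ hv]
  ring

lemma mul_mobiusFlip_add {v : ℝ} (hv : a * v + b ≠ 0) :
    a * mobiusFlip a b v + b = b * (a + b) / (a * v + b) := by
  rw [mobiusFlip, eq_div_iff hv, add_mul, mul_assoc, div_mul_cancel₀ _ hv]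
  ring

lemma hasDerivAt_mobiusFlip {v : ℝ} (hv : a * v + b ≠ 0) :
    HasDerivAt (mobiusFlip a b) (-(b * (a + b)) / (a * v + b) ^ 2) v :=
  ((((hasDerivAt_id v).const_sub 1).const_mul b).div
    (((hasDerivAt_id v).const_mul a).add_const b) hv).congr_deriv (by simp only [id]; ring)

variable (hb : 0 < b) (hab : 0 < a + b)
include hb hab

lemma mapsTo_mobiusFlip : MapsTo (mobiusFlip a b) (Ioo 0 1) (Ioo 0 1) := fun v hv ↦ by
  have hpos := mul_add_pos_of_mem_Icc hb hab (Ioo_subset_Icc_self hv)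
  refine ⟨div_pos (mul_pos hb (sub_pos.mpr hv.2)) hpos, (div_lt_one hpos).mpr ?_⟩
  nlinarith [hv.1]

lemma leftInvOn_mobiusFlip : LeftInvOn (mobiusFlip a b) (mobiusFlip a b) (Ioo 0 1) :=
    fun v hv ↦ by
  have hpos := mul_add_pos_of_mem_Icc hb hab (Ioo_subset_Icc_self hv)
  rw [mobiusFlip, one_sub_mobiusFlip hpos.ne', mul_mobiusFlip_add hpos.ne',
    div_eq_iff (by positivity)]
  ring

lemma bijOn_mobiusFlip : BijOn (mobiusFlip a b) (Ioo 0 1) (Ioo 0 1) :=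
  InvOn.bijOn ⟨leftInvOn_mobiusFlip hb hab, leftInvOn_mobiusFlip hb hab⟩
    (mapsTo_mobiusFlip hb hab) (mapsTo_mobiusFlip hb hab)

lemma abs_deriv_mobiusFlip_smul (s t : ℝ) {v : ℝ} (hv : v ∈ Ioo (0 : ℝ) 1) :
    |-(b * (a + b)) / (a * v + b) ^ 2| •
        (mobiusFlip a b v ^ (s - 1) * (1 - mobiusFlip a b v) ^ (t - 1)
          / (a * mobiusFlip a b v + b) ^ (s + t))
      = ((a + b) ^ s * b ^ t)⁻¹ * (v ^ (t - 1) * (1 - v) ^ (s - 1)) := by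
  have hw := mul_add_pos_of_mem_Icc hb hab (Ioo_subset_Icc_self hv)
  have hv₀ := hv.1
  have hv₁ : 0 < 1 - v := sub_pos.mpr hv.2
  rw [one_sub_mobiusFlip hw.ne', mul_mobiusFlip_add hw.ne', mobiusFlip, smul_eq_mul, abs_div,
    abs_neg, abs_of_pos (by positivity), abs_of_pos (by positivity),
    Real.div_rpow (by positivity) hw.le, Real.div_rpow (by positivity) hw.le,
    Real.div_rpow (by positivity) hw.le, Real.mul_rpow hb.le hv₁.le,
    Real.mul_rpow hv₀.le hab.le, Real.mul_rpow hb.le hab.le]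
  simp only [Real.rpow_sub_one hb.ne', Real.rpow_sub_one hab.ne', Real.rpow_sub_one hw.ne',
    Real.rpow_sub_one hv₀.ne', Real.rpow_sub_one hv₁.ne', Real.rpow_add hb, Real.rpow_add hab,
    Real.rpow_add hw]
  field_simp

end MobiusFlip

section LinearDenominator

variable {a b : ℝ} (hb : 0 < b) (hab : 0 < a + b)
include hb hab

lemma continuousOn_div_mul_add (c : ℝ) :
    ContinuousOn (fun u : ℝ => c / (a * u + b)) (Icc 0 1) :=
  continuousOn_const.div (by fun_prop) fun _ hu ↦ (mul_add_pos_of_mem_Icc hb hab hu).ne'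

lemma integral_rpow_mul_rpow_div_mul_add_rpow {s t : ℝ} (hs : 0 < s) (ht : 0 < t) :
    ∫ u in Ioo 0 1, u ^ (s - 1) * (1 - u) ^ (t - 1) / (a * u + b) ^ (s + t)
      = beta t s / ((a + b) ^ s * b ^ t) := by
  rw [← (bijOn_mobiusFlip hb hab).image_eq, integral_image_eq_integral_abs_deriv_smul
      measurableSet_Ioo (fun v hv ↦ (hasDerivAt_mobiusFlip
        (mul_add_pos_of_mem_Icc hb hab (Ioo_subset_Icc_self hv)).ne').hasDerivWithinAt)
      (bijOn_mobiusFlip hb hab).injOn,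
    setIntegral_congr_fun measurableSet_Ioo fun v hv ↦ abs_deriv_mobiusFlip_smul hb hab s t hv,
    integral_const_mul, integral_rpow_mul_one_sub_rpow ht hs, inv_mul_eq_div]

lemma integrableOn_rpow_mul_rpow_div_mul_add_rpow {s t : ℝ} (hs : 0 < s) (ht : 0 < t) (r : ℝ) :
    IntegrableOn (fun u : ℝ => u ^ (s - 1) * (1 - u) ^ (t - 1) / (a * u + b) ^ r) (Ioo 0 1) := by
  simp only [div_eq_mul_inv]
  refine integrableOn_rpow_mul_one_sub_rpow_mul hs ht (ContinuousOn.inv₀ ?_ fun u hu ↦ ?_)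
  · exact ContinuousOn.rpow_const (by fun_prop)
      fun _ hu ↦ Or.inl (mul_add_pos_of_mem_Icc hb hab hu).ne'
  · exact (Real.rpow_pos_of_pos (mul_add_pos_of_mem_Icc hb hab hu) r).ne'

lemma integrableOn_rpow_mul_rpow_mul_div_mul_add {α : ℝ} (hα₀ : -1 < α) (hα₁ : α < 1) :
    IntegrableOn (fun u : ℝ => u ^ (-α) * (1 - u) ^ α * (a / (a * u + b))) (Ioo 0 1) := by
  simpa only [sub_sub_cancel_left, add_sub_cancel_left] using
    integrableOn_rpow_mul_one_sub_rpow_mul (s := 1 - α) (t := 1 + α) (by linarith) (by linarith)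
      (continuousOn_div_mul_add hb hab a)

lemma integral_rpow_mul_rpow_mul_div_mul_add {α : ℝ} (hα₀ : 0 < α) (hα₁ : α < 1) :
    ∫ u in Ioo 0 1, u ^ (-α) * (1 - u) ^ α * (a / (a * u + b))
      = beta α (1 - α) * ((a + b) ^ α / b ^ α - 1) := by
  have hα' : 0 < 1 - α := sub_pos.mpr hα₁
  have hsplit : ∀ u ∈ Ioo (0 : ℝ) 1, u ^ (-α) * (1 - u) ^ α * (a / (a * u + b))
      = (a + b) * (u ^ (1 - α - 1) * (1 - u) ^ (α - 1) / (a * u + b) ^ (1 - α + α))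
        - u ^ (1 - α - 1) * (1 - u) ^ (α - 1) := by
    intro u hu
    have hw := mul_add_pos_of_mem_Icc hb hab (Ioo_subset_Icc_self hu)
    have hu₁ := sub_pos.mpr hu.2
    have hsub : (a + b) / (a * u + b) - 1 = a * (1 - u) / (a * u + b) := by
      rw [div_sub_one hw.ne']
      ring
    rw [show 1 - α - 1 = -α by ring, show 1 - α + α = 1 by ring, Real.rpow_one,
      Real.rpow_sub_one hu₁.ne']
    calc _ = u ^ (-α) * ((1 - u) ^ α / (1 - u)) * (a * (1 - u) / (a * u + b)) := by field_simp
      _ = _ := by rw [← hsub]; ring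
  rw [setIntegral_congr_fun measurableSet_Ioo hsplit,
    integral_sub ((integrableOn_rpow_mul_rpow_div_mul_add_rpow hb hab hα' hα₀ _).const_mul _)
      (integrableOn_rpow_mul_one_sub_rpow hα' hα₀),
    integral_const_mul, integral_rpow_mul_rpow_div_mul_add_rpow hb hab hα' hα₀,
    integral_rpow_mul_one_sub_rpow hα' hα₀, Real.rpow_sub hab, Real.rpow_one]
  simp only [beta, add_comm (1 - α)]
  field_simp

end LinearDenominator

lemma div_mul_add_mul_mul_add_eq_mul_sub {a a' b : ℝ} (c u : ℝ) (hb : b ≠ 0) (haa' : a ≠ a')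
    (hw : a * u + b ≠ 0) (hw' : a' * u + b ≠ 0) :
    c / ((a * u + b) * (a' * u + b))
      = c / (b * (a - a')) * (a / (a * u + b) - a' / (a' * u + b)) := by
  rw [div_sub_div _ _ hw hw', div_mul_div_comm, div_eq_div_iff (mul_ne_zero hw hw')
    (mul_ne_zero (mul_ne_zero hb (sub_ne_zero_of_ne haa')) (mul_ne_zero hw hw'))]
  ring

lemma betaDensity_one_sub_one_add {α : ℝ} (hα : α ≠ 0) (u : ℝ) :
    betaDensity (1 - α) (1 + α) u
      = (α * beta α (1 - α))⁻¹ * (u ^ (-α) * (1 - u) ^ α) := by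
  rw [betaDensity, beta, show 1 - α + (1 + α) = 2 by ring, show 1 - α - 1 = -α by ring,
    show 1 + α - 1 = α by ring, add_comm 1 α, Real.Gamma_add_one hα, add_sub_cancel,
    Real.Gamma_one, Real.Gamma_two]
  ring

theorem stmt1 (α a a' b : ℝ) (hα : 0 < α) (hα1 : α < 1) (hb : 0 < b)
    (hab : 0 < a + b) (hab' : 0 < a' + b) (haa' : a ≠ a') :
    ∫ u in Set.Icc (0:ℝ) 1, betaDensity (1 - α) (1 + α) u / ((a * u + b) * (a' * u + b))
      = ((a + b) ^ α - (a' + b) ^ α) / (α * (a - a') * b ^ (1 + α)) := by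
  have hβ := (beta_pos hα (sub_pos.mpr hα1)).ne'
  have hpt : ∀ u ∈ Ioo (0 : ℝ) 1,
      betaDensity (1 - α) (1 + α) u / ((a * u + b) * (a' * u + b))
        = (α * beta α (1 - α))⁻¹ / (b * (a - a'))
          * (u ^ (-α) * (1 - u) ^ α * (a / (a * u + b))
            - u ^ (-α) * (1 - u) ^ α * (a' / (a' * u + b))) := fun u hu ↦ by
    rw [div_mul_add_mul_mul_add_eq_mul_sub _ u hb.ne' haa'
      (mul_add_pos_of_mem_Icc hb hab (Ioo_subset_Icc_self hu)).ne'
      (mul_add_pos_of_mem_Icc hb hab' (Ioo_subset_Icc_self hu)).ne',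
      betaDensity_one_sub_one_add hα.ne']
    ring
  rw [integral_Icc_eq_integral_Ioo, setIntegral_congr_fun measurableSet_Ioo hpt, integral_const_mul,
    integral_sub (integrableOn_rpow_mul_rpow_mul_div_mul_add hb hab (by linarith) hα1)
      (integrableOn_rpow_mul_rpow_mul_div_mul_add hb hab' (by linarith) hα1),
    integral_rpow_mul_rpow_mul_div_mul_add hb hab hα hα1,
    integral_rpow_mul_rpow_mul_div_mul_add hb hab' hα hα1, Real.rpow_add hb, Real.rpow_one]
  have := sub_ne_zero_of_ne haa'
  field_simp
  ring
end

section
/- For any x, u ∈ [0,1] and positive integer n, x((1-u)x+u)^n + (1-x)((1-u)x)^n − x^n = u² · Σ_{k=2}^n C(n,k)(1-u)^{n-k} u^{k-2}(x^{n-k+1} − x^n). -/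
/-!
Write `t k = C(n,k) a^(n-k) b^k (x^(n-k+1) - x^n)`. By the binomial theorem
`∑_{k ≤ n} t k = x (a x + b)^n - x^n (a + b)^n`. The term `t 1` vanishes and
`t 0 = -(1 - x) (a x)^n`, so the sum over `2 ≤ k ≤ n` is the left-hand side, and each of its
terms carries the factor `b^2`. With `a = 1 - u`, `b = u` the weights sum to `1`.
-/

open Finset

variable {R : Type*} [CommRing R]

theorem sum_range_choose_mul_pow_mul_sub (a b x : R) (n : ℕ) :
    ∑ k ∈ range (n + 1), (n.choose k : R) * a ^ (n - k) * b ^ k * (x ^ (n - k + 1) - x ^ n)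
      = x * (a * x + b) ^ n - x ^ n * (a + b) ^ n := by
  rw [add_comm (a * x), add_comm a, add_pow, add_pow, mul_sum, mul_sum, ← sum_sub_distrib]
  refine sum_congr rfl fun k _ => ?_
  ring

theorem mul_add_pow_add_one_sub_mul_pow_sub (a b x : R) (n : ℕ) :
    x * (a * x + b) ^ n + (1 - x) * (a * x) ^ n - x ^ n * (a + b) ^ n
      = b ^ 2 * ∑ k ∈ Icc 2 n, (n.choose k : R) * a ^ (n - k) * b ^ (k - 2)
          * (x ^ (n - k + 1) - x ^ n) := by
  set t : ℕ → R := fun k => (n.choose k : R) * a ^ (n - k) * b ^ k * (x ^ (n - k + 1) - x ^ n)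
  have factor_b_sq : ∀ k ∈ Icc 2 n, b ^ 2 * ((n.choose k : R) * a ^ (n - k) * b ^ (k - 2)
      * (x ^ (n - k + 1) - x ^ n)) = t k := by
    intro k hk
    have hb : b ^ k = b ^ 2 * b ^ (k - 2) := by
      rw [← pow_add]; congr 1; have := (mem_Icc.mp hk).1; omega
    simp only [t, hb]
    ring
  have drop_t_one : ∑ k ∈ Icc 2 n, t k = ∑ k ∈ (range (n + 1)).erase 0, t k := by
    refine sum_subset (fun k hk => ?_) fun k hk hk' => ?_
    · simp only [mem_Icc] at hk
      simp only [mem_erase, mem_range]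
      omega
    · simp only [mem_erase, mem_range, mem_Icc] at hk hk'
      obtain ⟨rfl, hn⟩ : k = 1 ∧ n - 1 + 1 = n := by omega
      simp [t, hn]
  rw [mul_sum, sum_congr rfl factor_b_sq, drop_t_one,
    ← add_right_inj (t 0), add_sum_erase _ _ (mem_range.mpr n.succ_pos),
    sum_range_choose_mul_pow_mul_sub]
  simp only [t, Nat.choose_zero_right, Nat.sub_zero, pow_zero, pow_succ, mul_pow]
  ring

theorem stmt3_general (x u : ℝ)
    (n : ℕ) :
    x * ((1 - u) * x + u) ^ n + (1 - x) * ((1 - u) * x) ^ n - x ^ n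
      = u ^ 2 * ∑ k ∈ Finset.Icc 2 n, (n.choose k : ℝ) * (1 - u) ^ (n - k) * u ^ (k - 2)
          * (x ^ (n - k + 1) - x ^ n) := by
  simpa using mul_add_pow_add_one_sub_mul_pow_sub (1 - u) u x n

theorem stmt3 (x u : ℝ) (hx : x ∈ Set.Icc (0:ℝ) 1) (hu : u ∈ Set.Icc (0:ℝ) 1)
    (n : ℕ) (hn : 1 ≤ n) :
    x * ((1 - u) * x + u) ^ n + (1 - x) * ((1 - u) * x) ^ n - x ^ n
      = u ^ 2 * ∑ k ∈ Finset.Icc 2 n, (n.choose k : ℝ) * (1 - u) ^ (n - k) * u ^ (k - 2)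
          * (x ^ (n - k + 1) - x ^ n) :=
  stmt3_general x u n
end

section
/- Let 0 < α < 1, c₁, c₂ > 0, and define A_α G(x) = ∫₀¹ B_{1-α,1+α}(du)/u² · [xG((1-u)x+u) + (1-x)G((1-u)x) − G(x)] + ∫₀¹ B_{1-α,α}(du)/((α+1)u) · [c₁G((1-u)x+u) + c₂G((1-u)x) − (c₁+c₂)G(x)]. Then for every positive integer n, |A_α(x^n)| ≤ (1 + (c₁+c₂)/(α+1)) · 2^n for all x ∈ [0,1]. -/
open MeasureTheory

/-- Generator of the one-dimensional generalized Fleming–Viot process. -/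
noncomputable def genA (α c₁ c₂ : ℝ) (G : ℝ → ℝ) (x : ℝ) : ℝ :=
  (∫ u in Set.Icc (0:ℝ) 1, betaDensity (1 - α) (1 + α) u / u ^ 2
      * (x * G ((1 - u) * x + u) + (1 - x) * G ((1 - u) * x) - G x))
  + ∫ u in Set.Icc (0:ℝ) 1, betaDensity (1 - α) α u / ((α + 1) * u)
      * (c₁ * G ((1 - u) * x + u) + c₂ * G ((1 - u) * x) - (c₁ + c₂) * G x)

/-!
Both integrands are dominated by a multiple of a Beta density, which integrates to `1`.
For `G = (·)^n` and the two jump targets `y₁ = x + u(1-x)`, `y₂ = x - ux`, the first-order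
terms of the Taylor expansion at `x` cancel in `x G(y₁) + (1-x) G(y₂) - G(x)`, so it is
`O(n² u²)`, which absorbs the `u⁻²`; the second bracket is `O(n u)` since `G` is
`n`-Lipschitz on `[0,1]`, which absorbs the `u⁻¹`. Finally `n ≤ 2^n` and `n.choose 2 ≤ 2^n`.
-/

open MeasureTheory ProbabilityTheory Set

section BetaDensity

variable {a b : ℝ}

lemma betaDensity_eq_betaPDFReal {u : ℝ} (hu : u ∈ Ioo 0 1) :
    betaDensity a b u = betaPDFReal a b u := by
  rw [betaPDFReal, if_pos (show 0 < u ∧ u < 1 from hu), beta, one_div_div, betaDensity]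

lemma betaPDFReal_nonneg (ha : 0 < a) (hb : 0 < b) (u : ℝ) : 0 ≤ betaPDFReal a b u := by
  by_cases hu : u ∈ Ioo 0 1
  · exact (betaPDFReal_pos hu.1 hu.2 ha hb).le
  · rw [betaPDFReal, if_neg (show ¬(0 < u ∧ u < 1) from hu)]

lemma betaDensity_nonneg (ha : 0 < a) (hb : 0 < b) {u : ℝ} (hu : u ∈ Ioo 0 1) :
    0 ≤ betaDensity a b u :=
  (betaDensity_eq_betaPDFReal hu).symm ▸ betaPDFReal_nonneg ha hb u

lemma integrable_betaPDFReal (ha : 0 < a) (hb : 0 < b) : Integrable (betaPDFReal a b) := by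
  refine ⟨(measurable_betaPDFReal a b).aestronglyMeasurable, ?_⟩
  rw [hasFiniteIntegral_iff_ofReal (Filter.Eventually.of_forall (betaPDFReal_nonneg ha hb))]
  exact (lintegral_betaPDF_eq_one ha hb).trans_lt ENNReal.one_lt_top

lemma integral_betaPDFReal (ha : 0 < a) (hb : 0 < b) : ∫ u, betaPDFReal a b u = 1 := by
  rw [integral_eq_lintegral_of_nonneg_ae (Filter.Eventually.of_forall (betaPDFReal_nonneg ha hb))
    (measurable_betaPDFReal a b).aestronglyMeasurable]
  exact congrArg ENNReal.toReal (lintegral_betaPDF_eq_one ha hb)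

lemma abs_setIntegral_le_of_abs_le_betaDensity_mul (ha : 0 < a) (hb : 0 < b) {f : ℝ → ℝ}
    {C : ℝ} (hf : ∀ u ∈ Ioo (0 : ℝ) 1, |f u| ≤ betaDensity a b u * C) :
    |∫ u in Icc (0 : ℝ) 1, f u| ≤ C := by
  have hintegrable : IntegrableOn (betaDensity a b) (Ioo 0 1) :=
    (integrable_betaPDFReal ha hb).integrableOn.congr_fun
      (fun u hu => (betaDensity_eq_betaPDFReal hu).symm) measurableSet_Ioo
  have hmass : ∫ u in Ioo (0 : ℝ) 1, betaDensity a b u = 1 := by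
    rw [setIntegral_congr_fun measurableSet_Ioo (fun u hu => betaDensity_eq_betaPDFReal hu),
      setIntegral_eq_integral_of_forall_compl_eq_zero fun u hu => by
        rw [betaPDFReal, if_neg (show ¬(0 < u ∧ u < 1) from hu)],
      integral_betaPDFReal ha hb]
  calc |∫ u in Icc (0 : ℝ) 1, f u| = ‖∫ u in Ioo (0 : ℝ) 1, f u‖ := by
        rw [setIntegral_congr_set Ioo_ae_eq_Icc, Real.norm_eq_abs]
    _ ≤ ∫ u in Ioo (0 : ℝ) 1, betaDensity a b u * C :=
        norm_integral_le_of_norm_le (hintegrable.mul_const C)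
          (ae_restrict_of_forall_mem measurableSet_Ioo fun u hu => by
            simpa only [Real.norm_eq_abs] using hf u hu)
    _ = C := by rw [integral_mul_const, hmass, one_mul]

end BetaDensity

section PowerBounds

variable {x y : ℝ}

lemma abs_pow_sub_pow_le_of_mem_Icc (hx : x ∈ Icc (0 : ℝ) 1) (hy : y ∈ Icc (0 : ℝ) 1)
    (n : ℕ) : |y ^ n - x ^ n| ≤ n * |y - x| := by
  have hmax : max |y| |x| ≤ 1 := max_le (abs_le.2 ⟨by linarith [hy.1], hy.2⟩)
    (abs_le.2 ⟨by linarith [hx.1], hx.2⟩)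
  calc |y ^ n - x ^ n| ≤ |y - x| * n * max |y| |x| ^ (n - 1) := abs_pow_sub_pow_le ..
    _ ≤ |y - x| * n * 1 := by gcongr; exact pow_le_one₀ (by positivity) hmax
    _ = n * |y - x| := by ring

lemma abs_pow_succ_sub_taylor_le (hx : x ∈ Icc (0 : ℝ) 1) (hy : y ∈ Icc (0 : ℝ) 1)
    (n : ℕ) : |y ^ (n + 1) - x ^ (n + 1) - (n + 1) * x ^ n * (y - x)|
      ≤ (n + 1).choose 2 * (y - x) ^ 2 := by
  induction n with
  | zero => simp
  | succ n ih =>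
    have hxn : x ^ n ≤ 1 := pow_le_one₀ hx.1 hx.2
    have hchoose : (((n + 1 + 1).choose 2 : ℕ) : ℝ) = (n + 1).choose 2 + (n + 1) := by
      rw [Nat.choose_succ_succ', Nat.choose_one_right]; push_cast; ring
    calc |y ^ (n + 1 + 1) - x ^ (n + 1 + 1) - ((n + 1 : ℕ) + 1) * x ^ (n + 1) * (y - x)|
        = |y * (y ^ (n + 1) - x ^ (n + 1) - (n + 1) * x ^ n * (y - x))
            + (n + 1) * x ^ n * (y - x) ^ 2| := by push_cast; ring_nf
      _ ≤ 1 * ((n + 1).choose 2 * (y - x) ^ 2) + (n + 1) * 1 * (y - x) ^ 2 := by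
          refine (abs_add_le _ _).trans (add_le_add ?_ ?_)
          · rw [abs_mul, abs_of_nonneg hy.1]
            exact mul_le_mul hy.2 ih (abs_nonneg _) zero_le_one
          · rw [abs_of_nonneg (by have := hx.1; positivity)]
            gcongr
      _ = (n + 1 + 1).choose 2 * (y - x) ^ 2 := by rw [hchoose]; ring

end PowerBounds

section Increments

variable {x u : ℝ}

lemma resampling_targets_mem_Icc (hx : x ∈ Icc (0 : ℝ) 1) (hu : u ∈ Icc (0 : ℝ) 1) :
    (1 - u) * x + u ∈ Icc (0 : ℝ) 1 ∧ (1 - u) * x ∈ Icc (0 : ℝ) 1 := by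
  obtain ⟨hx0, hx1⟩ := hx
  obtain ⟨hu0, hu1⟩ := hu
  exact ⟨⟨by nlinarith, by nlinarith⟩, ⟨by nlinarith, by nlinarith⟩⟩

lemma abs_resampling_pow_le (hx : x ∈ Icc (0 : ℝ) 1) (hu : u ∈ Icc (0 : ℝ) 1) (n : ℕ) :
    |x * ((1 - u) * x + u) ^ n + (1 - x) * ((1 - u) * x) ^ n - x ^ n|
      ≤ n.choose 2 / 4 * u ^ 2 := by
  obtain ⟨hy₁, hy₂⟩ := resampling_targets_mem_Icc hx hu
  have hx0 : 0 ≤ x := hx.1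
  have hx1 : 0 ≤ 1 - x := by linarith [hx.2]
  cases n with
  | zero => simp
  | succ m =>
    set y₁ := (1 - u) * x + u
    set y₂ := (1 - u) * x
    set K : ℝ := ↑((m + 1).choose 2)
    -- the jump `y - x` has mean zero, so only the Taylor remainders survive
    have hremainders : x * y₁ ^ (m + 1) + (1 - x) * y₂ ^ (m + 1) - x ^ (m + 1)
        = x * (y₁ ^ (m + 1) - x ^ (m + 1) - (m + 1) * x ^ m * (y₁ - x))
          + (1 - x) * (y₂ ^ (m + 1) - x ^ (m + 1) - (m + 1) * x ^ m * (y₂ - x)) := by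
      simp only [y₁, y₂]; ring
    calc |x * y₁ ^ (m + 1) + (1 - x) * y₂ ^ (m + 1) - x ^ (m + 1)|
        ≤ x * (K * (y₁ - x) ^ 2) + (1 - x) * (K * (y₂ - x) ^ 2) := by
          rw [hremainders]
          refine (abs_add_le _ _).trans (add_le_add ?_ ?_)
          · rw [abs_mul, abs_of_nonneg hx0]
            exact mul_le_mul_of_nonneg_left (abs_pow_succ_sub_taylor_le hx hy₁ m) hx0
          · rw [abs_mul, abs_of_nonneg hx1]
            exact mul_le_mul_of_nonneg_left (abs_pow_succ_sub_taylor_le hx hy₂ m) hx1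
      _ = K * (x * (1 - x)) * u ^ 2 := by simp only [y₁, y₂]; ring
      _ ≤ K * (1 / 4) * u ^ 2 := by gcongr; nlinarith [sq_nonneg (x - 1 / 2)]
      _ = K / 4 * u ^ 2 := by ring

lemma abs_immigration_pow_le {c₁ c₂ : ℝ} (hc₁ : 0 ≤ c₁) (hc₂ : 0 ≤ c₂)
    (hx : x ∈ Icc (0 : ℝ) 1) (hu : u ∈ Icc (0 : ℝ) 1) (n : ℕ) :
    |c₁ * ((1 - u) * x + u) ^ n + c₂ * ((1 - u) * x) ^ n - (c₁ + c₂) * x ^ n|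
      ≤ (c₁ + c₂) * n * u := by
  obtain ⟨hy₁, hy₂⟩ := resampling_targets_mem_Icc hx hu
  have h₁ : |((1 - u) * x + u) ^ n - x ^ n| ≤ n * u := by
    have hjump : |(1 - u) * x + u - x| ≤ u := by
      rw [abs_le]; constructor <;> nlinarith [hx.1, hx.2, hu.1, hu.2]
    exact (abs_pow_sub_pow_le_of_mem_Icc hx hy₁ n).trans (by gcongr)
  have h₂ : |((1 - u) * x) ^ n - x ^ n| ≤ n * u := by
    have hjump : |(1 - u) * x - x| ≤ u := by
      rw [abs_le]; constructor <;> nlinarith [hx.1, hx.2, hu.1, hu.2]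
    exact (abs_pow_sub_pow_le_of_mem_Icc hx hy₂ n).trans (by gcongr)
  calc |c₁ * ((1 - u) * x + u) ^ n + c₂ * ((1 - u) * x) ^ n - (c₁ + c₂) * x ^ n|
      = |c₁ * (((1 - u) * x + u) ^ n - x ^ n) + c₂ * (((1 - u) * x) ^ n - x ^ n)| := by ring_nf
    _ ≤ c₁ * (n * u) + c₂ * (n * u) := by
        refine (abs_add_le _ _).trans (add_le_add ?_ ?_)
        · rw [abs_mul, abs_of_nonneg hc₁]; gcongr
        · rw [abs_mul, abs_of_nonneg hc₂]; gcongr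
    _ = (c₁ + c₂) * n * u := by ring

end Increments

section GeneratorOnPowers

variable {a b x : ℝ}

lemma abs_integral_resampling_pow_le (ha : 0 < a) (hb : 0 < b) (hx : x ∈ Icc (0 : ℝ) 1)
    (n : ℕ) :
    |∫ u in Icc (0 : ℝ) 1, betaDensity a b u / u ^ 2
        * (x * ((1 - u) * x + u) ^ n + (1 - x) * ((1 - u) * x) ^ n - x ^ n)|
      ≤ (n.choose 2 : ℝ) / 4 := by
  refine abs_setIntegral_le_of_abs_le_betaDensity_mul ha hb fun u hu => ?_
  have hweight : 0 ≤ betaDensity a b u / u ^ 2 :=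
    div_nonneg (betaDensity_nonneg ha hb hu) (sq_nonneg u)
  calc |betaDensity a b u / u ^ 2
        * (x * ((1 - u) * x + u) ^ n + (1 - x) * ((1 - u) * x) ^ n - x ^ n)|
      ≤ betaDensity a b u / u ^ 2 * (n.choose 2 / 4 * u ^ 2) := by
        rw [abs_mul, abs_of_nonneg hweight]
        exact mul_le_mul_of_nonneg_left (abs_resampling_pow_le hx (Ioo_subset_Icc_self hu) n)
          hweight
    _ = betaDensity a b u * (n.choose 2 / 4) := by field_simp [hu.1.ne']

lemma abs_integral_immigration_pow_le (ha : 0 < a) (hb : 0 < b) {κ c₁ c₂ : ℝ} (hκ : 0 < κ)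
    (hc₁ : 0 ≤ c₁) (hc₂ : 0 ≤ c₂) (hx : x ∈ Icc (0 : ℝ) 1) (n : ℕ) :
    |∫ u in Icc (0 : ℝ) 1, betaDensity a b u / (κ * u)
        * (c₁ * ((1 - u) * x + u) ^ n + c₂ * ((1 - u) * x) ^ n - (c₁ + c₂) * x ^ n)|
      ≤ (c₁ + c₂) / κ * n := by
  refine abs_setIntegral_le_of_abs_le_betaDensity_mul ha hb fun u hu => ?_
  have hweight : 0 ≤ betaDensity a b u / (κ * u) :=
    div_nonneg (betaDensity_nonneg ha hb hu) (mul_pos hκ hu.1).le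
  calc |betaDensity a b u / (κ * u)
        * (c₁ * ((1 - u) * x + u) ^ n + c₂ * ((1 - u) * x) ^ n - (c₁ + c₂) * x ^ n)|
      ≤ betaDensity a b u / (κ * u) * ((c₁ + c₂) * n * u) := by
        rw [abs_mul, abs_of_nonneg hweight]
        exact mul_le_mul_of_nonneg_left
          (abs_immigration_pow_le hc₁ hc₂ hx (Ioo_subset_Icc_self hu) n) hweight
    _ = betaDensity a b u * ((c₁ + c₂) / κ * n) := by field_simp [hu.1.ne']

end GeneratorOnPowers

theorem stmt4_general (α c₁ c₂ : ℝ) (hα : 0 < α) (hα1 : α < 1) (hc₁ : 0 < c₁) (hc₂ : 0 < c₂)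
    (n : ℕ) (x : ℝ) (hx : x ∈ Set.Icc (0:ℝ) 1) :
    |genA α c₁ c₂ (fun y => y ^ n) x| ≤ (1 + (c₁ + c₂) / (α + 1)) * 2 ^ n := by
  have hresampling := abs_integral_resampling_pow_le (a := 1 - α) (b := 1 + α)
    (by linarith) (by linarith) hx n
  have himmigration := abs_integral_immigration_pow_le (a := 1 - α) (by linarith) hα
    (by linarith : 0 < α + 1) hc₁.le hc₂.le hx n
  have hchoose : (n.choose 2 : ℝ) ≤ 2 ^ n := by exact_mod_cast Nat.choose_le_two_pow n 2
  have hn : (n : ℝ) ≤ 2 ^ n := by exact_mod_cast n.lt_two_pow_self.le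
  calc |genA α c₁ c₂ (fun y => y ^ n) x|
      ≤ (n.choose 2 : ℝ) / 4 + (c₁ + c₂) / (α + 1) * n := (abs_add_le _ _).trans
        (add_le_add hresampling himmigration)
    _ ≤ 2 ^ n + (c₁ + c₂) / (α + 1) * 2 ^ n := by gcongr; linarith
    _ = (1 + (c₁ + c₂) / (α + 1)) * 2 ^ n := by ring

theorem stmt4 (α c₁ c₂ : ℝ) (hα : 0 < α) (hα1 : α < 1) (hc₁ : 0 < c₁) (hc₂ : 0 < c₂)
    (n : ℕ) (hn : 1 ≤ n) (x : ℝ) (hx : x ∈ Set.Icc (0:ℝ) 1) :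
    |genA α c₁ c₂ (fun y => y ^ n) x| ≤ (1 + (c₁ + c₂) / (α + 1)) * 2 ^ n :=
  stmt4_general α c₁ c₂ hα hα1 hc₁ hc₂ n x hx
end

section
/- Let 0 < α < 1, c₁, c₂ > 0, t > 0 and x ∈ [0,1]. With G_t(x) = (1+tx)^{-1} and A_α the generator defined via Beta(1−α,1+α) resampling and Beta(1−α,α) mutation terms, one has A_α G_t(x) = t · ((1+t)^α − 1)/α · x(1-x)/(1+tx)^{2+α} − t/(α+1) · [c₁(1-x)(1+t)^{α-1} − c₂ x]/(1+tx)^{1+α}. -/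
/-!
Since `1 + t((1-u)y + uz) = (1-u)(1+ty) + u(1+tz)`, both values `G_t((1-u)x + u)` and
`G_t((1-u)x)` are reciprocals of linear interpolations `(1-u)p + uq` with `p = 1 + tx` and
`q ∈ {1 + t, 1}`. After partial fractions, both integrands of `A_α G_t(x)` are combinations of
`u^(-α) (1-u)^(α-1) / ((1-u)p + uq)`, and the substitution `v = qu / ((1-u)p + uq)` gives
`∫₀¹ u^(a-1) (1-u)^(b-1) / ((1-u)p + uq)^(a+b) du = B(a,b) / (p^b q^a)`.
-/

open MeasureTheory

open Set ProbabilityTheory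

lemma integrableOn_and_integral_rpow_mul_one_sub_rpow {a b : ℝ} (ha : 0 < a) (hb : 0 < b) :
    IntegrableOn (fun u : ℝ => u ^ (a - 1) * (1 - u) ^ (b - 1)) (Ioo 0 1) ∧
    ∫ u in Ioo (0:ℝ) 1, u ^ (a - 1) * (1 - u) ^ (b - 1) = beta a b := by
  set f : ℝ → ℝ := fun u => 1 / beta a b * u ^ (a - 1) * (1 - u) ^ (b - 1)
  have hf_nonneg : 0 ≤ᵐ[volume.restrict (Ioo 0 1)] f := by
    filter_upwards [ae_restrict_mem measurableSet_Ioo] with u hu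
    have := (beta_pos ha hb).le
    have : 0 < 1 - u := by linarith [hu.2]
    have := hu.1
    positivity
  have hf_lint : ∫⁻ u in Ioo 0 1, ENNReal.ofReal (f u) = 1 :=
    lintegral_betaPDF ▸ lintegral_betaPDF_eq_one ha hb
  have hf_meas : AEStronglyMeasurable f (volume.restrict (Ioo 0 1)) := by
    apply Measurable.aestronglyMeasurable; fun_prop
  have hf_int : IntegrableOn f (Ioo 0 1) :=
    ⟨hf_meas, (hasFiniteIntegral_iff_ofReal hf_nonneg).2 (by simp [hf_lint])⟩
  have hf_eq : ∫ u in Ioo 0 1, f u = 1 := by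
    rw [integral_eq_lintegral_of_nonneg_ae hf_nonneg hf_meas, hf_lint, ENNReal.toReal_one]
  have hβ := (beta_pos ha hb).ne'
  have hkernel : (fun u : ℝ => u ^ (a - 1) * (1 - u) ^ (b - 1)) = fun u => beta a b * f u := by
    ext u; simp only [f]; field_simp
  rw [hkernel, integral_const_mul, hf_eq, mul_one]
  exact ⟨hf_int.const_mul _, rfl⟩

lemma betaDensity_eq (a b u : ℝ) :
    betaDensity a b u = (beta a b)⁻¹ * (u ^ (a - 1) * (1 - u) ^ (b - 1)) := by
  rw [betaDensity, beta, inv_div]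
  ring

lemma beta_add_one_right {a b : ℝ} (hb : b ≠ 0) (hab : a + b ≠ 0) :
    beta a (b + 1) = b / (a + b) * beta a b := by
  rw [beta, beta, Real.Gamma_add_one hb, ← add_assoc, Real.Gamma_add_one hab]
  by_cases h : Real.Gamma (a + b) = 0
  · simp [h]
  · field_simp

noncomputable def moebiusUnit (p q u : ℝ) : ℝ := q * u / ((1 - u) * p + u * q)

section Moebius
variable {p q u : ℝ}

lemma one_sub_mul_add_mul_pos (hp : 0 < p) (hq : 0 < q) (hu : u ∈ Ioo (0:ℝ) 1) :
    0 < (1 - u) * p + u * q := by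
  have := hu.1
  have : 0 < 1 - u := by linarith [hu.2]
  positivity

lemma hasDerivAt_moebiusUnit (hD : (1 - u) * p + u * q ≠ 0) :
    HasDerivAt (moebiusUnit p q) (p * q / ((1 - u) * p + u * q) ^ 2) u := by
  have h := ((hasDerivAt_id' u).const_mul q).div
    ((((hasDerivAt_id' u).const_sub 1).mul_const p).add ((hasDerivAt_id' u).mul_const q)) hD
  refine h.congr_deriv ?_
  simp only [Pi.add_apply]
  ring

lemma one_sub_moebiusUnit (hD : (1 - u) * p + u * q ≠ 0) :
    1 - moebiusUnit p q u = (1 - u) * p / ((1 - u) * p + u * q) := by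
  rw [moebiusUnit, eq_div_iff hD, sub_mul, div_mul_cancel₀ _ hD]
  ring

lemma moebiusUnit_moebiusUnit (hp : 0 < p) (hq : 0 < q) (hu : u ∈ Ioo (0:ℝ) 1) :
    moebiusUnit q p (moebiusUnit p q u) = u := by
  have hD := (one_sub_mul_add_mul_pos hp hq hu).ne'
  have := hu.1
  have : 0 < 1 - u := by linarith [hu.2]
  rw [moebiusUnit, one_sub_moebiusUnit hD, moebiusUnit]
  field_simp
  ring

lemma mapsTo_moebiusUnit (hp : 0 < p) (hq : 0 < q) :
    MapsTo (moebiusUnit p q) (Ioo 0 1) (Ioo 0 1) := by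
  intro u hu
  have hD := one_sub_mul_add_mul_pos hp hq hu
  have := hu.1
  have : 0 < 1 - u := by linarith [hu.2]
  refine ⟨by unfold moebiusUnit; positivity, ?_⟩
  rw [moebiusUnit, div_lt_one hD]
  nlinarith

lemma bijOn_moebiusUnit (hp : 0 < p) (hq : 0 < q) :
    BijOn (moebiusUnit p q) (Ioo 0 1) (Ioo 0 1) :=
  InvOn.bijOn ⟨fun _ hu => moebiusUnit_moebiusUnit hp hq hu,
    fun _ hv => moebiusUnit_moebiusUnit hq hp hv⟩ (mapsTo_moebiusUnit hp hq)
    (mapsTo_moebiusUnit hq hp)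

lemma rpow_mul_one_sub_rpow_div_eq_moebiusUnit {a b : ℝ} (hp : 0 < p) (hq : 0 < q)
    (hu : u ∈ Ioo (0:ℝ) 1) :
    u ^ (a - 1) * (1 - u) ^ (b - 1) / ((1 - u) * p + u * q) ^ (a + b)
      = (p ^ b * q ^ a)⁻¹ * (|p * q / ((1 - u) * p + u * q) ^ 2|
        * (moebiusUnit p q u ^ (a - 1) * (1 - moebiusUnit p q u) ^ (b - 1))) := by
  have hD := one_sub_mul_add_mul_pos hp hq hu
  have hu0 := hu.1
  have hu1 : 0 < 1 - u := by linarith [hu.2]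
  rw [one_sub_moebiusUnit hD.ne', moebiusUnit, abs_of_pos (by positivity),
    Real.div_rpow (by positivity) hD.le, Real.div_rpow (by positivity) hD.le,
    Real.mul_rpow hq.le hu0.le, Real.mul_rpow hu1.le hp.le, Real.rpow_add hD,
    Real.rpow_sub_one hq.ne', Real.rpow_sub_one hp.ne', Real.rpow_sub_one hD.ne',
    Real.rpow_sub_one hD.ne', Real.rpow_sub_one hu0.ne', Real.rpow_sub_one hu1.ne']
  have := Real.rpow_pos_of_pos hp b
  have := Real.rpow_pos_of_pos hq a
  have := Real.rpow_pos_of_pos hD a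
  have := Real.rpow_pos_of_pos hD b
  field_simp

end Moebius

section BetaKernel
variable {a b p q : ℝ}

lemma integrableOn_and_integral_rpow_mul_one_sub_rpow_div (ha : 0 < a) (hb : 0 < b)
    (hp : 0 < p) (hq : 0 < q) :
    IntegrableOn (fun u : ℝ => u ^ (a - 1) * (1 - u) ^ (b - 1) / ((1 - u) * p + u * q) ^ (a + b))
      (Ioo 0 1) ∧
    ∫ u in Ioo (0:ℝ) 1, u ^ (a - 1) * (1 - u) ^ (b - 1) / ((1 - u) * p + u * q) ^ (a + b)
      = beta a b / (p ^ b * q ^ a) := by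
  obtain ⟨hint, hval⟩ := integrableOn_and_integral_rpow_mul_one_sub_rpow ha hb
  have hbij := bijOn_moebiusUnit hp hq
  have hderiv : ∀ u ∈ Ioo (0:ℝ) 1, HasDerivWithinAt (moebiusUnit p q)
      (p * q / ((1 - u) * p + u * q) ^ 2) (Ioo 0 1) u := fun u hu =>
    (hasDerivAt_moebiusUnit (one_sub_mul_add_mul_pos hp hq hu).ne').hasDerivWithinAt
  have hpull := fun u (hu : u ∈ Ioo (0:ℝ) 1) =>
    rpow_mul_one_sub_rpow_div_eq_moebiusUnit (a := a) (b := b) hp hq hu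
  have hint' := (integrableOn_image_iff_integrableOn_abs_deriv_smul measurableSet_Ioo hderiv
    hbij.injOn (fun v => v ^ (a - 1) * (1 - v) ^ (b - 1))).1 (by rwa [hbij.image_eq])
  have hval' := integral_image_eq_integral_abs_deriv_smul measurableSet_Ioo hderiv
    hbij.injOn (fun v => v ^ (a - 1) * (1 - v) ^ (b - 1))
  simp only [smul_eq_mul, hbij.image_eq, hval] at hint' hval'
  refine ⟨IntegrableOn.congr_fun (hint'.const_mul _) (fun u hu => (hpull u hu).symm)
    measurableSet_Ioo, ?_⟩
  rw [setIntegral_congr_fun measurableSet_Ioo hpull, integral_const_mul, ← hval', div_eq_inv_mul]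

lemma integrableOn_and_integral_rpow_mul_one_sub_rpow_div_of_add_eq_one (ha : 0 < a)
    (hb : 0 < b) (hab : a + b = 1) (hp : 0 < p) (hq : 0 < q) :
    IntegrableOn (fun u : ℝ => u ^ (a - 1) * (1 - u) ^ (b - 1) / ((1 - u) * p + u * q))
      (Ioo 0 1) ∧
    ∫ u in Ioo (0:ℝ) 1, u ^ (a - 1) * (1 - u) ^ (b - 1) / ((1 - u) * p + u * q)
      = beta a b / (p ^ b * q ^ a) := by
  simpa only [hab, Real.rpow_one] using
    integrableOn_and_integral_rpow_mul_one_sub_rpow_div ha hb hp hq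

lemma integral_rpow_mul_one_sub_rpow_mul_add_div (ha : 0 < a) (hb : 0 < b) (hab : a + b = 1)
    {p q₁ q₂ : ℝ} (hp : 0 < p) (hq₁ : 0 < q₁) (hq₂ : 0 < q₂) (c₁ c₂ : ℝ) :
    ∫ u in Ioo (0:ℝ) 1, u ^ (a - 1) * (1 - u) ^ (b - 1)
        * (c₁ / ((1 - u) * p + u * q₁) + c₂ / ((1 - u) * p + u * q₂))
      = beta a b * (c₁ / (p ^ b * q₁ ^ a) + c₂ / (p ^ b * q₂ ^ a)) := by
  obtain ⟨hint₁, hval₁⟩ :=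
    integrableOn_and_integral_rpow_mul_one_sub_rpow_div_of_add_eq_one ha hb hab hp hq₁
  obtain ⟨hint₂, hval₂⟩ :=
    integrableOn_and_integral_rpow_mul_one_sub_rpow_div_of_add_eq_one ha hb hab hp hq₂
  have hsplit : ∀ u : ℝ, u ^ (a - 1) * (1 - u) ^ (b - 1)
      * (c₁ / ((1 - u) * p + u * q₁) + c₂ / ((1 - u) * p + u * q₂))
      = c₁ * (u ^ (a - 1) * (1 - u) ^ (b - 1) / ((1 - u) * p + u * q₁))
        + c₂ * (u ^ (a - 1) * (1 - u) ^ (b - 1) / ((1 - u) * p + u * q₂)) := fun u => by ring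
  simp only [hsplit]
  rw [integral_add (hint₁.const_mul c₁) (hint₂.const_mul c₂), integral_const_mul,
    integral_const_mul, hval₁, hval₂]
  ring

end BetaKernel

section Generator
variable {α t x : ℝ}

lemma integral_resampling_inv_one_add_mul (hα : 0 < α) (hα1 : α < 1) (hA : 0 < 1 + t * x)
    (hP : 0 < 1 + t) :
    ∫ u in Icc (0:ℝ) 1, betaDensity (1 - α) (1 + α) u / u ^ 2
        * (x * (1 + t * ((1 - u) * x + u))⁻¹ + (1 - x) * (1 + t * ((1 - u) * x))⁻¹
          - (1 + t * x)⁻¹)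
      = t * (((1 + t) ^ α - 1) / α) * (x * (1 - x) / (1 + t * x) ^ (2 + α)) := by
  have hB := (beta_pos (by linarith : 0 < 1 - α) hα).ne'
  have hpt : EqOn (fun u => betaDensity (1 - α) (1 + α) u / u ^ 2
        * (x * (1 + t * ((1 - u) * x + u))⁻¹ + (1 - x) * (1 + t * ((1 - u) * x))⁻¹
          - (1 + t * x)⁻¹))
      (fun u => t * x * (1 - x) / (α * beta (1 - α) α * (1 + t * x) ^ 2)
        * (u ^ (1 - α - 1) * (1 - u) ^ (α - 1)
          * ((1 + t) / ((1 - u) * (1 + t * x) + u * (1 + t))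
            + (-1) / ((1 - u) * (1 + t * x) + u * 1)))) (Ioo 0 1) := by
    intro u hu
    have hu0 := hu.1
    have hu1 : 0 < 1 - u := by linarith [hu.2]
    have hD₁ := one_sub_mul_add_mul_pos hA hP hu
    have hD₂ : 0 < (1 - u) * (1 + t * x) + u := by
      simpa using one_sub_mul_add_mul_pos hA one_pos hu
    simp only [mul_one]
    rw [betaDensity_eq, add_comm 1 α, beta_add_one_right hα.ne' (by linarith),
      show (1:ℝ) - α + α = 1 by ring, show α + 1 - 1 = α - 1 + 1 by ring,
      Real.rpow_add_one hu1.ne', show 1 + t * ((1 - u) * x + u)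
        = (1 - u) * (1 + t * x) + u * (1 + t) by ring,
      show 1 + t * ((1 - u) * x) = (1 - u) * (1 + t * x) + u by ring]
    set A := 1 + t * x
    -- for the two denominators `D₁`, `D₂`, the partial fraction `(1 + t) D₂ - D₁ = t (1 - u) A`
    -- absorbs the extra factor `1 - u` of the Beta(1-α, 1+α) density
    field_simp
    ring
  rw [integral_Icc_eq_integral_Ioo, setIntegral_congr_fun measurableSet_Ioo hpt,
    integral_const_mul, integral_rpow_mul_one_sub_rpow_mul_add_div (by linarith) hα
    (by ring) hA hP one_pos, Real.one_rpow, Real.rpow_sub hP, Real.rpow_one,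
    Real.rpow_add hA, Real.rpow_two]
  have := Real.rpow_pos_of_pos hA α
  have := Real.rpow_pos_of_pos hP α
  field_simp
  ring

lemma integral_mutation_inv_one_add_mul (hα : 0 < α) (hα1 : α < 1) (hA : 0 < 1 + t * x)
    (hP : 0 < 1 + t) (c₁ c₂ : ℝ) :
    ∫ u in Icc (0:ℝ) 1, betaDensity (1 - α) α u / ((α + 1) * u)
        * (c₁ * (1 + t * ((1 - u) * x + u))⁻¹ + c₂ * (1 + t * ((1 - u) * x))⁻¹
          - (c₁ + c₂) * (1 + t * x)⁻¹)
      = -(t / (α + 1) * ((c₁ * (1 - x) * (1 + t) ^ (α - 1) - c₂ * x)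
          / (1 + t * x) ^ (1 + α))) := by
  have hB := (beta_pos (by linarith : 0 < 1 - α) hα).ne'
  have hpt : EqOn (fun u => betaDensity (1 - α) α u / ((α + 1) * u)
        * (c₁ * (1 + t * ((1 - u) * x + u))⁻¹ + c₂ * (1 + t * ((1 - u) * x))⁻¹
          - (c₁ + c₂) * (1 + t * x)⁻¹))
      (fun u => -(t / ((α + 1) * beta (1 - α) α * (1 + t * x)))
        * (u ^ (1 - α - 1) * (1 - u) ^ (α - 1)
          * (c₁ * (1 - x) / ((1 - u) * (1 + t * x) + u * (1 + t))
            + (-(c₂ * x)) / ((1 - u) * (1 + t * x) + u * 1)))) (Ioo 0 1) := by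
    intro u hu
    have hu0 := hu.1
    have hD₁ := one_sub_mul_add_mul_pos hA hP hu
    have hD₂ : 0 < (1 - u) * (1 + t * x) + u := by
      simpa using one_sub_mul_add_mul_pos hA one_pos hu
    simp only [mul_one]
    rw [betaDensity_eq, show 1 + t * ((1 - u) * x + u)
        = (1 - u) * (1 + t * x) + u * (1 + t) by ring,
      show 1 + t * ((1 - u) * x) = (1 - u) * (1 + t * x) + u by ring]
    field_simp
    ring
  rw [integral_Icc_eq_integral_Ioo, setIntegral_congr_fun measurableSet_Ioo hpt,
    integral_const_mul, integral_rpow_mul_one_sub_rpow_mul_add_div (by linarith) hα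
    (by ring) hA hP one_pos, Real.one_rpow, Real.rpow_sub hP, Real.rpow_sub hP,
    Real.rpow_one, Real.rpow_add hA, Real.rpow_one]
  have := Real.rpow_pos_of_pos hA α
  have := Real.rpow_pos_of_pos hP α
  field_simp
  ring

end Generator

theorem stmt5_general (α c₁ c₂ t x : ℝ) (hα : 0 < α) (hα1 : α < 1)
    (ht : 0 < t) (hx : x ∈ Set.Icc (0:ℝ) 1) :
    genA α c₁ c₂ (fun y => (1 + t * y)⁻¹) x
      = t * (((1 + t) ^ α - 1) / α) * (x * (1 - x) / (1 + t * x) ^ (2 + α))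
        - t / (α + 1) * ((c₁ * (1 - x) * (1 + t) ^ (α - 1) - c₂ * x) / (1 + t * x) ^ (1 + α)) := by
  have hA : 0 < 1 + t * x := by nlinarith [hx.1]
  have hP : 0 < 1 + t := by linarith
  rw [genA, integral_resampling_inv_one_add_mul hα hα1 hA hP,
    integral_mutation_inv_one_add_mul hα hα1 hA hP]
  ring

theorem stmt5 (α c₁ c₂ t x : ℝ) (hα : 0 < α) (hα1 : α < 1) (hc₁ : 0 < c₁) (hc₂ : 0 < c₂)
    (ht : 0 < t) (hx : x ∈ Set.Icc (0:ℝ) 1) :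
    genA α c₁ c₂ (fun y => (1 + t * y)⁻¹) x
      = t * (((1 + t) ^ α - 1) / α) * (x * (1 - x) / (1 + t * x) ^ (2 + α))
        - t / (α + 1) * ((c₁ * (1 - x) * (1 + t) ^ (α - 1) - c₂ * x) / (1 + t * x) ^ (1 + α)) :=
  stmt5_general α c₁ c₂ t x hα hα1 ht hx
end

section
/- Let 0 < α < 1, y ∈ [0,1], and let (Y₁,Y₂) have joint law with Laplace transform E[e^{-λ₁Y₁-λ₂Y₂}] = exp(−y λ₁^α − (1-y) λ₂^α) for λ₁,λ₂ ≥ 0. Then for every t ≥ 0, E[(tY₁+Y₂)^{-α}] = 1/(Γ(α+1)(1+(t^α−1)y)). -/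
/-!
Put `Z = t Y₁ + Y₂`; its Laplace transform is `E e^{-lZ} = exp (-c l^α)` with
`c = y t^α + (1 - y) ≥ 0`.

If `c > 0` the transform tends to `0` as `l → ∞`, so the Chernoff bound gives `Z > 0` a.s. Then
`z^{-α} = Γ(α)⁻¹ ∫₀^∞ v^{α-1} e^{-vz} dv` and Tonelli give
`E Z^{-α} = Γ(α)⁻¹ ∫₀^∞ v^{α-1} e^{-c v^α} dv = Γ(α)⁻¹ (α c)⁻¹ = (Γ(α+1) c)⁻¹`.

If `c = 0` then `E (e^{-Z} - 1)² = E e^{-2Z} - 2 E e^{-Z} + 1 = 0`, so `Z = 0` a.s., and both sides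
vanish by the conventions `0 ^ (-α) = 0` and `0⁻¹ = 0`.
-/

open MeasureTheory ProbabilityTheory Real Set Filter Topology

namespace Real

lemma rpow_neg_eq_inv_Gamma_mul_integral {α z : ℝ} (hα : 0 < α) (hz : 0 < z) :
    z ^ (-α) = (Gamma α)⁻¹ * ∫ v in Ioi 0, v ^ (α - 1) * exp (-v * z) := by
  have key := integral_rpow_mul_exp_neg_mul_Ioi hα hz
  simp only [mul_comm z, ← neg_mul] at key
  rw [key, one_div, inv_rpow hz.le, ← rpow_neg hz.le]
  field_simp [(Gamma_pos_of_pos hα).ne']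

lemma ofReal_rpow_neg_eq_lintegral {α z : ℝ} (hα : 0 < α) (hz : 0 < z) :
    ENNReal.ofReal (z ^ (-α)) =
      ENNReal.ofReal (Gamma α)⁻¹ * ∫⁻ v in Ioi 0, ENNReal.ofReal (v ^ (α - 1) * exp (-v * z)) := by
  have hint : IntegrableOn (fun v : ℝ => v ^ (α - 1) * exp (-v * z)) (Ioi 0) :=
    .of_integral_ne_zero fun h => (rpow_pos_of_pos hz (-α)).ne' (by
      rw [rpow_neg_eq_inv_Gamma_mul_integral hα hz, h, mul_zero])
  rw [← ofReal_integral_eq_lintegral_ofReal hint,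
    ← ENNReal.ofReal_mul (by positivity [Gamma_pos_of_pos hα]),
    rpow_neg_eq_inv_Gamma_mul_integral hα hz]
  filter_upwards [ae_restrict_mem measurableSet_Ioi] with v (hv : 0 < v)
  positivity

end Real

lemma integral_rpow_sub_one_mul_exp_neg_mul_rpow {α c : ℝ} (hα : 0 < α) (hc : 0 < c) :
    ∫ v in Ioi 0, v ^ (α - 1) * exp (-(c * v ^ α)) = (α * c)⁻¹ := by
  simp only [← neg_mul]
  rw [integral_rpow_mul_exp_neg_mul_rpow hα (by linarith) hc, sub_add_cancel, div_self hα.ne',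
    neg_div_self hα.ne', Gamma_one, rpow_neg_one]
  field_simp

namespace ProbabilityTheory

variable {Ω : Type*} {m : MeasurableSpace Ω} {μ : Measure Ω} {X : Ω → ℝ}

lemma ae_eq_zero_of_mgf_eq_one [IsProbabilityMeasure μ] {t : ℝ} (ht : t ≠ 0)
    (h₁ : mgf X μ t = 1) (h₂ : mgf X μ (2 * t) = 1) : X =ᵐ[μ] 0 := by
  have hi₁ : Integrable (fun ω => exp (t * X ω)) μ :=
    .of_integral_ne_zero (by rw [← mgf, h₁]; exact one_ne_zero)
  have hi₂ : Integrable (fun ω => exp (2 * t * X ω)) μ :=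
    .of_integral_ne_zero (by rw [← mgf, h₂]; exact one_ne_zero)
  have hsq : ∀ ω, (exp (t * X ω) - 1) ^ 2 = exp (2 * t * X ω) - 2 * exp (t * X ω) + 1 := by
    intro ω
    rw [mul_assoc, two_mul, exp_add]
    ring
  have hint : Integrable (fun ω => (exp (t * X ω) - 1) ^ 2) μ := by
    simp only [hsq]
    exact (hi₂.sub (hi₁.const_mul 2)).add (integrable_const 1)
  have hzero : ∫ ω, (exp (t * X ω) - 1) ^ 2 ∂μ = 0 := by
    simp only [hsq]
    rw [integral_add (by exact hi₂.sub (hi₁.const_mul 2)) (integrable_const 1),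
      integral_sub hi₂ (hi₁.const_mul 2), integral_const_mul, ← mgf, ← mgf, h₁, h₂]
    norm_num
  filter_upwards [(integral_eq_zero_iff_of_nonneg (fun ω => sq_nonneg _) hint).1 hzero] with ω hω
  have : exp (t * X ω) = 1 := by simpa [sub_eq_zero] using hω
  simpa [ht] using this

lemma ae_pos_of_tendsto_mgf_atBot [IsFiniteMeasure μ]
    (hint : ∀ t ≤ 0, Integrable (fun ω => exp (t * X ω)) μ) (h : Tendsto (mgf X μ) atBot (𝓝 0)) :
    ∀ᵐ ω ∂μ, 0 < X ω := by
  have hle : ∀ t ≤ 0, μ.real {ω | X ω ≤ 0} ≤ mgf X μ t := fun t ht => by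
    simpa using measure_le_le_exp_mul_mgf 0 ht (hint t ht)
  have : μ.real {ω | X ω ≤ 0} ≤ 0 := ge_of_tendsto h (eventually_atBot.2 ⟨0, hle⟩)
  rw [ae_iff]
  simpa [not_lt, measureReal_eq_zero_iff] using le_antisymm this measureReal_nonneg

lemma lintegral_rpow_neg_eq_lintegral_mgf [SFinite μ] (hX : Measurable X)
    (hint : ∀ t ≤ 0, Integrable (fun ω => exp (t * X ω)) μ) (hpos : ∀ᵐ ω ∂μ, 0 < X ω)
    {α : ℝ} (hα : 0 < α) :
    ∫⁻ ω, ENNReal.ofReal (X ω ^ (-α)) ∂μ =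
      ENNReal.ofReal (Gamma α)⁻¹ * ∫⁻ v in Ioi 0, ENNReal.ofReal (v ^ (α - 1) * mgf X μ (-v)) := by
  have hmeas : Measurable fun q : Ω × ℝ => ENNReal.ofReal (q.2 ^ (α - 1) * exp (-q.2 * X q.1)) := by
    fun_prop
  calc ∫⁻ ω, ENNReal.ofReal (X ω ^ (-α)) ∂μ
      = ∫⁻ ω, ENNReal.ofReal (Gamma α)⁻¹ *
          (∫⁻ v in Ioi 0, ENNReal.ofReal (v ^ (α - 1) * exp (-v * X ω))) ∂μ := by
        refine lintegral_congr_ae ?_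
        filter_upwards [hpos] with ω hω using ofReal_rpow_neg_eq_lintegral hα hω
    _ = ENNReal.ofReal (Gamma α)⁻¹ *
          ∫⁻ v in Ioi 0, ∫⁻ ω, ENNReal.ofReal (v ^ (α - 1) * exp (-v * X ω)) ∂μ := by
        rw [lintegral_const_mul _ hmeas.lintegral_prod_right',
          lintegral_lintegral_swap hmeas.aemeasurable]
    _ = _ := by
        congr 1
        refine setLIntegral_congr_fun measurableSet_Ioi fun v (hv : 0 < v) => ?_
        rw [← ofReal_integral_eq_lintegral_ofReal ((hint (-v) (by linarith)).const_mul _)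
          (ae_of_all _ fun ω => by positivity), integral_const_mul, mgf]

theorem integral_rpow_neg_of_mgf_eq_exp_rpow [IsProbabilityMeasure μ] (hX : Measurable X)
    {α c : ℝ} (hα : 0 < α) (hc : 0 ≤ c) (hmgf : ∀ l, 0 ≤ l → mgf X μ (-l) = exp (-(c * l ^ α))) :
    ∫ ω, X ω ^ (-α) ∂μ = (Gamma (α + 1) * c)⁻¹ := by
  rcases hc.eq_or_lt with rfl | hc
  · have hX0 : X =ᵐ[μ] 0 := ae_eq_zero_of_mgf_eq_one (t := -1) (by norm_num)
      (by simpa using hmgf 1 zero_le_one) (by simpa using hmgf 2 zero_le_two)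
    have : (fun ω => X ω ^ (-α)) =ᵐ[μ] 0 := hX0.mono fun ω hω => by
      simp [hω, zero_rpow (neg_ne_zero.2 hα.ne')]
    simp [integral_congr_ae this]
  have hint : ∀ t ≤ 0, Integrable (fun ω => exp (t * X ω)) μ := fun t ht =>
    .of_integral_ne_zero (by rw [← mgf, ← neg_neg t, hmgf (-t) (by linarith)]; exact (exp_pos _).ne')
  have hlim : Tendsto (mgf X μ) atBot (𝓝 0) := by
    refine Tendsto.congr' (eventually_atBot.2 ⟨0, fun t ht => ?_⟩)
      (tendsto_exp_atBot.comp <| tendsto_neg_atTop_atBot.comp <| Tendsto.const_mul_atTop hc <|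
        (tendsto_rpow_atTop hα).comp tendsto_neg_atBot_atTop)
    simp [← hmgf (-t) (by linarith)]
  have hpos : ∀ᵐ ω ∂μ, 0 < X ω := ae_pos_of_tendsto_mgf_atBot hint hlim
  have hint' : IntegrableOn (fun v : ℝ => v ^ (α - 1) * exp (-(c * v ^ α))) (Ioi 0) :=
    .of_integral_ne_zero (by rw [integral_rpow_sub_one_mul_exp_neg_mul_rpow hα hc]; positivity)
  have hΓ := Gamma_pos_of_pos hα
  rw [integral_eq_lintegral_of_nonneg_ae (hpos.mono fun ω hω => (rpow_pos_of_pos hω _).le)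
      (hX.pow_const _).aestronglyMeasurable,
    lintegral_rpow_neg_eq_lintegral_mgf hX hint hpos hα,
    setLIntegral_congr_fun measurableSet_Ioi fun v (hv : 0 < v) => by rw [hmgf v hv.le],
    ← ofReal_integral_eq_lintegral_ofReal hint' ?_, integral_rpow_sub_one_mul_exp_neg_mul_rpow hα hc,
    ← ENNReal.ofReal_mul (by positivity), ENNReal.toReal_ofReal (by positivity),
    Gamma_add_one hα.ne']
  · ring
  · filter_upwards [ae_restrict_mem measurableSet_Ioi] with v (hv : 0 < v)
    positivity

end ProbabilityTheory

theorem stmt6_general (α y : ℝ) (hα : 0 < α) (hy : y ∈ Set.Icc (0:ℝ) 1)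
    (μ : Measure (ℝ × ℝ)) [IsProbabilityMeasure μ]
    (hLap : ∀ l₁ l₂ : ℝ, 0 ≤ l₁ → 0 ≤ l₂ →
      ∫ p, Real.exp (-(l₁ * p.1) - l₂ * p.2) ∂μ
        = Real.exp (-(y * l₁ ^ α) - (1 - y) * l₂ ^ α))
    (t : ℝ) (ht : 0 ≤ t) :
    ∫ p, (t * p.1 + p.2) ^ (-α) ∂μ
      = 1 / (Real.Gamma (α + 1) * (1 + (t ^ α - 1) * y)) := by
  have hc : 0 ≤ 1 + (t ^ α - 1) * y := by nlinarith [hy.1, hy.2, rpow_nonneg ht α]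
  have hmgf : ∀ l, 0 ≤ l → mgf (fun p : ℝ × ℝ => t * p.1 + p.2) μ (-l) =
      exp (-((1 + (t ^ α - 1) * y) * l ^ α)) := fun l hl => by
    have h := hLap (l * t) l (mul_nonneg hl ht) hl
    rw [mul_rpow hl ht] at h
    convert h using 1
    · exact integral_congr_ae (ae_of_all _ fun p => by ring_nf)
    · ring_nf
  rw [one_div]
  exact integral_rpow_neg_of_mgf_eq_exp_rpow (by fun_prop) hα hc hmgf

theorem stmt6 (α y : ℝ) (hα : 0 < α) (hα1 : α < 1) (hy : y ∈ Set.Icc (0:ℝ) 1)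
    (μ : Measure (ℝ × ℝ)) [IsProbabilityMeasure μ]
    (hLap : ∀ l₁ l₂ : ℝ, 0 ≤ l₁ → 0 ≤ l₂ →
      ∫ p, Real.exp (-(l₁ * p.1) - l₂ * p.2) ∂μ
        = Real.exp (-(y * l₁ ^ α) - (1 - y) * l₂ ^ α))
    (t : ℝ) (ht : 0 ≤ t) :
    ∫ p, (t * p.1 + p.2) ^ (-α) ∂μ
      = 1 / (Real.Gamma (α + 1) * (1 + (t ^ α - 1) * y)) :=
  stmt6_general α y hα hy μ hLap t ht
end

section
/- Let 0 < α < 1, y ∈ [0,1] and (Y₁,Y₂) with Laplace transform E[e^{-λ₁Y₁-λ₂Y₂}] = exp(−yλ₁^α − (1-y)λ₂^α). Then Γ(α+1) E[(Y₁+Y₂)^{-α}] = 1, so that Γ(α+1) E[(Y₁+Y₂)^{-α}; Y₁/(Y₁+Y₂) ∈ ·] defines a probability measure on [0,1]. -/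
/-!
Only the Laplace transform of `S = Y₁ + Y₂` matters: setting `λ₁ = λ₂ = t` gives
`E[e^{-tS}] = e^{-t^α}`, which tends to `0` as `t → ∞`, so `S > 0` almost surely. Integrating the identity `Γ(α) s^{-α} = ∫₀^∞ t^{α-1} e^{-st} dt` against the
law of `S` and exchanging the integrals (Tonelli) yields
`Γ(α) E[S^{-α}] = ∫₀^∞ t^{α-1} e^{-t^α} dt = 1/α`, i.e. `Γ(α+1) E[S^{-α}] = 1`.
-/

open MeasureTheory Set Filter Topology

lemma lintegral_rpow_mul_exp_neg_mul_Ioi {a s : ℝ} (ha : 0 < a) (hs : 0 < s) :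
    ∫⁻ t in Ioi 0, ENNReal.ofReal (t ^ (a - 1) * Real.exp (-(s * t)))
      = ENNReal.ofReal (Real.Gamma a * s ^ (-a)) := by
  have hint : IntegrableOn (fun t : ℝ => t ^ (a - 1) * Real.exp (-(s * t))) (Ioi 0) := by
    simpa [Real.rpow_one, neg_mul] using
      integrableOn_rpow_mul_exp_neg_mul_rpow (p := 1) (s := a - 1) (b := s) (by linarith) one_pos hs
  have hnn : 0 ≤ᵐ[volume.restrict (Ioi 0)] fun t : ℝ => t ^ (a - 1) * Real.exp (-(s * t)) :=
    (ae_restrict_iff' measurableSet_Ioi).2 <| .of_forall fun t (ht : 0 < t) => by positivity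
  rw [← ofReal_integral_eq_lintegral_ofReal hint hnn, Real.integral_rpow_mul_exp_neg_mul_Ioi ha hs,
    one_div, Real.inv_rpow hs.le, ← Real.rpow_neg hs.le, mul_comm]

lemma lintegral_rpow_mul_exp_neg_rpow_Ioi {a : ℝ} (ha : 0 < a) :
    ∫⁻ t in Ioi 0, ENNReal.ofReal (t ^ (a - 1) * Real.exp (-t ^ a)) = ENNReal.ofReal a⁻¹ := by
  have hexp : IntegrableOn (fun u : ℝ => Real.exp (-u)) (Ioi 0) := by
    simpa [neg_mul] using exp_neg_integrableOn_Ioi 0 one_pos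
  have hint : IntegrableOn (fun t : ℝ => t ^ (a - 1) * Real.exp (-t ^ a)) (Ioi 0) := by
    simpa [smul_eq_mul] using (integrableOn_Ioi_comp_rpow_iff' _ ha.ne').2 hexp
  have hnn : 0 ≤ᵐ[volume.restrict (Ioi 0)] fun t : ℝ => t ^ (a - 1) * Real.exp (-t ^ a) :=
    (ae_restrict_iff' measurableSet_Ioi).2 <| .of_forall fun t (ht : 0 < t) => by positivity
  rw [← ofReal_integral_eq_lintegral_ofReal hint hnn,
    integral_rpow_mul_exp_neg_rpow ha (by linarith : (-1 : ℝ) < a - 1),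
    sub_add_cancel, div_self ha.ne', Real.Gamma_one, mul_one, one_div]

section NegativeMoment

variable {Ω : Type*} [MeasurableSpace Ω] {μ : Measure Ω} {S : Ω → ℝ} {α : ℝ}

lemma lintegral_ofReal_exp_neg_mul_eq
    (hL : ∀ t, 0 ≤ t → ∫ ω, Real.exp (-(t * S ω)) ∂μ = Real.exp (-t ^ α)) {t : ℝ} (ht : 0 ≤ t) :
    ∫⁻ ω, ENNReal.ofReal (Real.exp (-(t * S ω))) ∂μ = ENNReal.ofReal (Real.exp (-t ^ α)) := by
  have hint : Integrable (fun ω => Real.exp (-(t * S ω))) μ :=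
    Integrable.of_integral_ne_zero (by rw [hL t ht]; exact (Real.exp_pos _).ne')
  rw [← ofReal_integral_eq_lintegral_ofReal hint (.of_forall fun _ => (Real.exp_pos _).le), hL t ht]

lemma ae_pos_of_integral_exp_neg_mul_eq (hα : 0 < α) (hS : Measurable S)
    (hL : ∀ t, 0 ≤ t → ∫ ω, Real.exp (-(t * S ω)) ∂μ = Real.exp (-t ^ α)) :
    ∀ᵐ ω ∂μ, 0 < S ω := by
  -- `e^{-tS} ≥ 1` on `{S ≤ 0}`, so Markov bounds `μ {S ≤ 0}` by `e^{-t^α}`, which tends to `0`.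
  have hbound : ∀ t, 0 ≤ t → μ {ω | ¬ 0 < S ω} ≤ ENNReal.ofReal (Real.exp (-t ^ α)) := by
    intro t ht
    calc μ {ω | ¬ 0 < S ω}
        ≤ μ {ω | 1 ≤ ENNReal.ofReal (Real.exp (-(t * S ω)))} := by
          refine measure_mono fun ω (hω : ¬ 0 < S ω) => ENNReal.one_le_ofReal.2 ?_
          exact Real.one_le_exp (by nlinarith [not_lt.1 hω])
      _ ≤ ∫⁻ ω, ENNReal.ofReal (Real.exp (-(t * S ω))) ∂μ := by
          simpa using mul_meas_ge_le_lintegral (μ := μ)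
            (measurable_const.mul hS).neg.exp.ennreal_ofReal 1
      _ = ENNReal.ofReal (Real.exp (-t ^ α)) := lintegral_ofReal_exp_neg_mul_eq hL ht
  have hlim : Tendsto (fun t : ℝ => ENNReal.ofReal (Real.exp (-t ^ α))) atTop (𝓝 0) := by
    simpa using ENNReal.tendsto_ofReal
      (Real.tendsto_exp_atBot.comp (tendsto_neg_atTop_atBot.comp (tendsto_rpow_atTop hα)))
  exact ae_iff.2 <| nonpos_iff_eq_zero.1 <|
    ge_of_tendsto hlim ((eventually_ge_atTop 0).mono hbound)

lemma ofReal_Gamma_mul_lintegral_rpow_neg [SFinite μ] (hα : 0 < α) (hS : Measurable S)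
    (hpos : ∀ᵐ ω ∂μ, 0 < S ω) :
    ENNReal.ofReal (Real.Gamma α) * ∫⁻ ω, ENNReal.ofReal (S ω ^ (-α)) ∂μ
      = ∫⁻ t in Ioi (0 : ℝ),
          ENNReal.ofReal (t ^ (α - 1)) * ∫⁻ ω, ENNReal.ofReal (Real.exp (-(t * S ω))) ∂μ := by
  calc ENNReal.ofReal (Real.Gamma α) * ∫⁻ ω, ENNReal.ofReal (S ω ^ (-α)) ∂μ
      = ∫⁻ ω, (∫⁻ t in Ioi 0, ENNReal.ofReal (t ^ (α - 1) * Real.exp (-(S ω * t)))) ∂μ := by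
        rw [← lintegral_const_mul' _ _ ENNReal.ofReal_ne_top]
        refine lintegral_congr_ae ?_
        filter_upwards [hpos] with ω hω
        rw [lintegral_rpow_mul_exp_neg_mul_Ioi hα hω,
          ENNReal.ofReal_mul (Real.Gamma_pos_of_pos hα).le]
    _ = ∫⁻ t in Ioi 0, ∫⁻ ω, ENNReal.ofReal (t ^ (α - 1) * Real.exp (-(S ω * t))) ∂μ :=
        lintegral_lintegral_swap <| Measurable.aemeasurable <| Measurable.ennreal_ofReal <|
          (measurable_snd.pow_const _).mul (hS.comp measurable_fst |>.mul measurable_snd).neg.exp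
    _ = _ := by
        refine setLIntegral_congr_fun measurableSet_Ioi fun t (ht : 0 < t) => ?_
        rw [← lintegral_const_mul' _ _ ENNReal.ofReal_ne_top]
        simp_rw [← ENNReal.ofReal_mul (Real.rpow_nonneg ht.le _), mul_comm t]

lemma lintegral_ofReal_Gamma_mul_rpow_neg_eq_one [SFinite μ] (hα : 0 < α) (hS : Measurable S)
    (hL : ∀ t, 0 ≤ t → ∫ ω, Real.exp (-(t * S ω)) ∂μ = Real.exp (-t ^ α)) :
    ∫⁻ ω, ENNReal.ofReal (Real.Gamma (α + 1) * S ω ^ (-α)) ∂μ = 1 := by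
  have hGamma : ENNReal.ofReal (Real.Gamma α) * ∫⁻ ω, ENNReal.ofReal (S ω ^ (-α)) ∂μ
      = ENNReal.ofReal α⁻¹ := by
    rw [ofReal_Gamma_mul_lintegral_rpow_neg hα hS (ae_pos_of_integral_exp_neg_mul_eq hα hS hL),
      ← lintegral_rpow_mul_exp_neg_rpow_Ioi hα]
    refine setLIntegral_congr_fun measurableSet_Ioi fun t (ht : 0 < t) => ?_
    rw [lintegral_ofReal_exp_neg_mul_eq hL ht.le, ENNReal.ofReal_mul (Real.rpow_nonneg ht.le _)]
  simp_rw [ENNReal.ofReal_mul (Real.Gamma_pos_of_pos (by linarith : 0 < α + 1)).le]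
  rw [lintegral_const_mul' _ _ ENNReal.ofReal_ne_top, Real.Gamma_add_one hα.ne',
    ENNReal.ofReal_mul hα.le, mul_assoc, hGamma, ← ENNReal.ofReal_mul hα.le,
    mul_inv_cancel₀ hα.ne', ENNReal.ofReal_one]

end NegativeMoment

theorem stmt7_general (α y : ℝ) (hα : 0 < α)
    (μ : Measure (ℝ × ℝ)) [IsProbabilityMeasure μ]
    (hLap : ∀ l₁ l₂ : ℝ, 0 ≤ l₁ → 0 ≤ l₂ →
      ∫ p, Real.exp (-(l₁ * p.1) - l₂ * p.2) ∂μ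
        = Real.exp (-(y * l₁ ^ α) - (1 - y) * l₂ ^ α)) :
    Real.Gamma (α + 1) * ∫ p, (p.1 + p.2) ^ (-α) ∂μ = 1 ∧
    IsProbabilityMeasure
      ((μ.withDensity
          (fun p => ENNReal.ofReal (Real.Gamma (α + 1) * (p.1 + p.2) ^ (-α)))).map
        (fun p => p.1 / (p.1 + p.2))) := by
  have hS : Measurable fun p : ℝ × ℝ => p.1 + p.2 := by fun_prop
  have hL : ∀ t, 0 ≤ t → ∫ p, Real.exp (-(t * (p.1 + p.2))) ∂μ = Real.exp (-t ^ α) := by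
    intro t ht
    convert hLap t t ht ht using 2 <;> ring_nf
  have hmass := lintegral_ofReal_Gamma_mul_rpow_neg_eq_one hα hS hL
  have hnn : 0 ≤ᵐ[μ] fun p : ℝ × ℝ => Real.Gamma (α + 1) * (p.1 + p.2) ^ (-α) := by
    filter_upwards [ae_pos_of_integral_exp_neg_mul_eq hα hS hL] with p hp
    have := Real.Gamma_pos_of_pos (by linarith : 0 < α + 1)
    positivity
  refine ⟨?_, ?_⟩
  · rw [← integral_const_mul, integral_eq_lintegral_of_nonneg_ae hnn
      (measurable_const.mul (hS.pow_const _)).aestronglyMeasurable, hmass,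
      ENNReal.toReal_one]
  · have : IsProbabilityMeasure (μ.withDensity
        fun p => ENNReal.ofReal (Real.Gamma (α + 1) * (p.1 + p.2) ^ (-α))) :=
      ⟨by rw [withDensity_apply _ MeasurableSet.univ, Measure.restrict_univ, hmass]⟩
    exact Measure.isProbabilityMeasure_map (by fun_prop)

theorem stmt7 (α y : ℝ) (hα : 0 < α) (hα1 : α < 1) (hy : y ∈ Set.Icc (0:ℝ) 1)
    (μ : Measure (ℝ × ℝ)) [IsProbabilityMeasure μ]
    (hLap : ∀ l₁ l₂ : ℝ, 0 ≤ l₁ → 0 ≤ l₂ →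
      ∫ p, Real.exp (-(l₁ * p.1) - l₂ * p.2) ∂μ
        = Real.exp (-(y * l₁ ^ α) - (1 - y) * l₂ ^ α)) :
    Real.Gamma (α + 1) * ∫ p, (p.1 + p.2) ^ (-α) ∂μ = 1 ∧
    IsProbabilityMeasure
      ((μ.withDensity
          (fun p => ENNReal.ofReal (Real.Gamma (α + 1) * (p.1 + p.2) ^ (-α)))).map
        (fun p => p.1 / (p.1 + p.2))) :=
  stmt7_general α y hα μ hLap
end

section
/- Let 0 < α < 1, y ∈ [0,1], t ≥ 0 and (Y₁,Y₂) as above. Then 1/(1 + ((1+t)^α − 1)y) = Γ(α+1) ∫₀¹ (1+tx)^{-α} E_{α,y}[(Y₁+Y₂)^{-α}; Y₁/(Y₁+Y₂) ∈ dx], i.e., the biased projection of (Y₁,Y₂) to the ratio Y₁/(Y₁+Y₂) has generalized Stieltjes transform of order α equal to (1+((1+t)^α−1)y)^{-1}. -/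
/-!
Write `S = (1 + t) Y₁ + Y₂`, so that the integrand is `S ^ (-α)`. The Laplace transform of `S` is
`λ ↦ exp (-c λ ^ α)` with `c = 1 + ((1 + t) ^ α - 1) y`. Subordination,
`Γ(α + 1) s ^ (-α) = ∫₀^∞ exp (-s v ^ (1/α)) dv`, and Tonelli give
`Γ(α + 1) E[S ^ (-α)] = ∫₀^∞ E[exp (-v ^ (1/α) S)] dv = ∫₀^∞ exp (-c v) dv = 1 / c`.
-/

open MeasureTheory Filter Topology Real

lemma lintegral_ofReal_eq_of_integral_ne_zero {Ω : Type*} [MeasurableSpace Ω] {μ : Measure Ω}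
    {g : Ω → ℝ} (hg : 0 ≤ᵐ[μ] g) (h : ∫ x, g x ∂μ ≠ 0) :
    ∫⁻ x, ENNReal.ofReal (g x) ∂μ = ENNReal.ofReal (∫ x, g x ∂μ) :=
  (ofReal_integral_eq_lintegral_ofReal (Integrable.of_integral_ne_zero h) hg).symm

lemma lintegral_exp_neg_mul_rpow_inv {α s : ℝ} (hα : 0 < α) (hs : 0 < s) :
    ∫⁻ v in Set.Ioi (0 : ℝ), ENNReal.ofReal (exp (-v ^ α⁻¹ * s))
      = ENNReal.ofReal (Gamma (α + 1) * s ^ (-α)) := by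
  have hval : ∫ v in Set.Ioi (0 : ℝ), exp (-v ^ α⁻¹ * s) = Gamma (α + 1) * s ^ (-α) := by
    simp_rw [neg_mul, mul_comm _ s, ← neg_mul]
    rw [integral_exp_neg_mul_rpow (inv_pos.2 hα) hs, div_inv_eq_mul, one_div, inv_inv]
    ring_nf
  have hpos : 0 < Gamma (α + 1) * s ^ (-α) := by
    have := Gamma_pos_of_pos (by linarith : 0 < α + 1)
    positivity
  rw [lintegral_ofReal_eq_of_integral_ne_zero (.of_forall fun _ ↦ (exp_pos _).le)
    (hval ▸ hpos.ne'), hval]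

lemma lintegral_exp_neg_mul_Ioi {c : ℝ} (hc : 0 < c) :
    ∫⁻ v in Set.Ioi (0 : ℝ), ENNReal.ofReal (exp (-c * v)) = ENNReal.ofReal (1 / c) := by
  have hval : ∫ v in Set.Ioi (0 : ℝ), exp (-c * v) = 1 / c := by
    rw [integral_exp_mul_Ioi (neg_lt_zero.2 hc)]
    simp [neg_div]
  rw [lintegral_ofReal_eq_of_integral_ne_zero (.of_forall fun _ ↦ (exp_pos _).le)
    (hval ▸ (one_div_pos.2 hc).ne'), hval]

lemma ofReal_Gamma_mul_lintegral_rpow_neg_s8 {Ω : Type*} [MeasurableSpace Ω] {μ : Measure Ω}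
    [SFinite μ] {f : Ω → ℝ} (hf : Measurable f) (hpos : ∀ᵐ x ∂μ, 0 < f x) {α : ℝ} (hα : 0 < α) :
    ENNReal.ofReal (Gamma (α + 1)) * ∫⁻ x, ENNReal.ofReal (f x ^ (-α)) ∂μ
      = ∫⁻ v in Set.Ioi (0 : ℝ), ∫⁻ x, ENNReal.ofReal (exp (-v ^ α⁻¹ * f x)) ∂μ := by
  rw [← lintegral_const_mul' _ _ ENNReal.ofReal_ne_top]
  calc ∫⁻ x, ENNReal.ofReal (Gamma (α + 1)) * ENNReal.ofReal (f x ^ (-α)) ∂μ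
      = ∫⁻ x, (∫⁻ v in Set.Ioi (0 : ℝ), ENNReal.ofReal (exp (-v ^ α⁻¹ * f x))) ∂μ := by
        refine lintegral_congr_ae ?_
        filter_upwards [hpos] with x hx
        rw [lintegral_exp_neg_mul_rpow_inv hα hx,
          ENNReal.ofReal_mul (Gamma_pos_of_pos (by linarith)).le]
    _ = _ := lintegral_lintegral_swap (Measurable.aemeasurable (by fun_prop))

section LaplaceTransform

variable {Ω : Type*} [MeasurableSpace Ω] {μ : Measure Ω} {f : Ω → ℝ} {α c : ℝ}

lemma lintegral_exp_neg_mul_of_integral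
    (hL : ∀ l : ℝ, 0 ≤ l → ∫ x, exp (-l * f x) ∂μ = exp (-c * l ^ α)) {l : ℝ} (hl : 0 ≤ l) :
    ∫⁻ x, ENNReal.ofReal (exp (-l * f x)) ∂μ = ENNReal.ofReal (exp (-c * l ^ α)) := by
  rw [lintegral_ofReal_eq_of_integral_ne_zero (.of_forall fun _ ↦ (exp_pos _).le)
    (hL l hl ▸ (exp_pos _).ne'), hL l hl]

/-- Markov's inequality for `exp (-l f)` on `{f ≤ 0}`, letting `l → ∞`. -/
lemma ae_pos_of_integral_exp_neg_mul
    (hL : ∀ l : ℝ, 0 ≤ l → ∫ x, exp (-l * f x) ∂μ = exp (-c * l ^ α))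
    (hf : Measurable f) (hα : 0 < α) (hc : 0 < c) : ∀ᵐ x ∂μ, 0 < f x := by
  have hbound : ∀ l : ℝ, 0 ≤ l → μ {x | f x ≤ 0} ≤ ENNReal.ofReal (exp (-c * l ^ α)) := by
    intro l hl
    rw [← lintegral_exp_neg_mul_of_integral hL hl]
    calc μ {x | f x ≤ 0} ≤ μ {x | 1 ≤ ENNReal.ofReal (exp (-l * f x))} := by
          refine measure_mono fun x (hx : f x ≤ 0) ↦ ?_
          simpa using one_le_exp (by nlinarith : 0 ≤ -l * f x)
      _ ≤ _ := by
          simpa using mul_meas_ge_le_lintegral₀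
            (by fun_prop : Measurable fun x ↦ ENNReal.ofReal (exp (-l * f x))).aemeasurable 1
  have hlim : Tendsto (fun l : ℝ ↦ ENNReal.ofReal (exp (-c * l ^ α))) atTop (𝓝 0) := by
    rw [← ENNReal.ofReal_zero]
    refine ENNReal.tendsto_ofReal (tendsto_exp_atBot.comp ?_)
    simpa using (tendsto_rpow_atTop hα).const_mul_atTop hc
  have hnull : μ {x | f x ≤ 0} = 0 :=
    le_antisymm (ge_of_tendsto hlim (eventually_ge_atTop 0 |>.mono hbound)) bot_le
  simpa [ae_iff] using hnull

lemma Gamma_mul_integral_rpow_neg_of_integral_exp_neg_mul [SFinite μ]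
    (hL : ∀ l : ℝ, 0 ≤ l → ∫ x, exp (-l * f x) ∂μ = exp (-c * l ^ α))
    (hf : Measurable f) (hα : 0 < α) (hc : 0 < c) :
    Gamma (α + 1) * ∫ x, f x ^ (-α) ∂μ = 1 / c := by
  have hpos := ae_pos_of_integral_exp_neg_mul hL hf hα hc
  have hlin : ENNReal.ofReal (Gamma (α + 1)) * ∫⁻ x, ENNReal.ofReal (f x ^ (-α)) ∂μ
      = ENNReal.ofReal (1 / c) := by
    rw [ofReal_Gamma_mul_lintegral_rpow_neg_s8 hf hpos hα, ← lintegral_exp_neg_mul_Ioi hc]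
    refine setLIntegral_congr_fun measurableSet_Ioi fun v (hv : 0 < v) ↦ ?_
    rw [lintegral_exp_neg_mul_of_integral hL (by positivity), rpow_inv_rpow hv.le hα.ne']
  have := congrArg ENNReal.toReal hlin
  rwa [ENNReal.toReal_mul, ENNReal.toReal_ofReal (Gamma_pos_of_pos (by linarith)).le,
    ENNReal.toReal_ofReal (by positivity), ← integral_eq_lintegral_of_nonneg_ae
      (hpos.mono fun _ hx ↦ (rpow_nonneg hx.le _)) (hf.pow_const _).aestronglyMeasurable] at this

end LaplaceTransform

lemma integral_exp_neg_mul_mul_fst_add_snd {μ : Measure (ℝ × ℝ)} {α y : ℝ}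
    (hLap : ∀ l₁ l₂ : ℝ, 0 ≤ l₁ → 0 ≤ l₂ →
      ∫ p, exp (-(l₁ * p.1) - l₂ * p.2) ∂μ = exp (-(y * l₁ ^ α) - (1 - y) * l₂ ^ α))
    {s : ℝ} (hs : 0 ≤ s) (l : ℝ) (hl : 0 ≤ l) :
    ∫ p, exp (-l * (s * p.1 + p.2)) ∂μ = exp (-(1 + (s ^ α - 1) * y) * l ^ α) := by
  have h := hLap (s * l) l (by positivity) hl
  rw [mul_rpow hs hl] at h
  convert h using 3 with p
  · congr 1; ring
  · ring

lemma one_add_mul_div_rpow_neg_mul_rpow_neg {a b t α : ℝ} (hab : 0 < a + b)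
    (hS : 0 < (1 + t) * a + b) :
    (1 + t * (a / (a + b))) ^ (-α) * (a + b) ^ (-α) = ((1 + t) * a + b) ^ (-α) := by
  have hmul : (1 + t * (a / (a + b))) * (a + b) = (1 + t) * a + b := by
    field_simp
    ring
  have hpos : 0 < 1 + t * (a / (a + b)) := (mul_pos_iff_of_pos_right hab).1 (hmul ▸ hS)
  rw [← mul_rpow hpos.le hab.le, hmul]

theorem stmt8_general (α y t : ℝ) (hα : 0 < α) (hy : y ∈ Set.Icc (0:ℝ) 1)
    (ht : 0 ≤ t) (μ : Measure (ℝ × ℝ)) [IsProbabilityMeasure μ]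
    (hLap : ∀ l₁ l₂ : ℝ, 0 ≤ l₁ → 0 ≤ l₂ →
      ∫ p, Real.exp (-(l₁ * p.1) - l₂ * p.2) ∂μ
        = Real.exp (-(y * l₁ ^ α) - (1 - y) * l₂ ^ α)) :
    1 / (1 + ((1 + t) ^ α - 1) * y)
      = Real.Gamma (α + 1)
          * ∫ p, (1 + t * (p.1 / (p.1 + p.2))) ^ (-α) * (p.1 + p.2) ^ (-α) ∂μ := by
  have hc : ∀ s : ℝ, 1 ≤ s → 0 < 1 + (s ^ α - 1) * y := fun s hs ↦ by
    nlinarith [one_le_rpow hs hα.le, hy.1]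
  have h1t : (1 : ℝ) ≤ 1 + t := by linarith
  have hLS := integral_exp_neg_mul_mul_fst_add_snd hLap (zero_le_one.trans h1t)
  have hSpos := ae_pos_of_integral_exp_neg_mul hLS (by fun_prop) hα (hc _ h1t)
  have hsumpos := ae_pos_of_integral_exp_neg_mul
    (integral_exp_neg_mul_mul_fst_add_snd hLap zero_le_one) (by fun_prop) hα (hc 1 le_rfl)
  rw [← Gamma_mul_integral_rpow_neg_of_integral_exp_neg_mul hLS (by fun_prop) hα (hc _ h1t)]
  congr 1
  refine integral_congr_ae ?_
  filter_upwards [hSpos, hsumpos] with p hS hsum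
  rw [one_mul] at hsum
  exact (one_add_mul_div_rpow_neg_mul_rpow_neg hsum hS).symm

theorem stmt8 (α y t : ℝ) (hα : 0 < α) (hα1 : α < 1) (hy : y ∈ Set.Icc (0:ℝ) 1)
    (ht : 0 ≤ t) (μ : Measure (ℝ × ℝ)) [IsProbabilityMeasure μ]
    (hLap : ∀ l₁ l₂ : ℝ, 0 ≤ l₁ → 0 ≤ l₂ →
      ∫ p, Real.exp (-(l₁ * p.1) - l₂ * p.2) ∂μ
        = Real.exp (-(y * l₁ ^ α) - (1 - y) * l₂ ^ α)) :
    1 / (1 + ((1 + t) ^ α - 1) * y)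
      = Real.Gamma (α + 1)
          * ∫ p, (1 + t * (p.1 / (p.1 + p.2))) ^ (-α) * (p.1 + p.2) ^ (-α) ∂μ :=
  stmt8_general α y t hα hy ht μ hLap
end

section
/- Let 0 < α < 1 and c > 1. If Z is a nonnegative random variable with Laplace transform E[e^{-λZ}] = exp(−c log(1+λ^α)) for λ ≥ 0, then E[Z^{-α}] = 1/(Γ(α+1)(c−1)). -/
open MeasureTheory Set Filter Real Topology

open scoped ENNReal

/-!
For `z > 0`, `Γ(α) z^(-α) = ∫₀^∞ v^(α-1) e^(-vz) dv`; at `z = 0` the right side is `∞`. By Tonelli,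
`Γ(α) E[Z^(-α)] = ∫₀^∞ v^(α-1) E[e^(-vZ)] dv`, and finiteness of the right side forces `Z > 0` a.s.
With `E[e^(-vZ)] = (1 + v^α)^(-c)` the substitution `u = v^α` turns the right side into
`α⁻¹ ∫₀^∞ (1 + u)^(-c) du = (α (c - 1))⁻¹`, and `Γ(α + 1) = α Γ(α)`.
-/

theorem lintegral_Ioi_ofReal_rpow_eq_top (s : ℝ) :
    ∫⁻ v in Ioi (0 : ℝ), ENNReal.ofReal (v ^ s) = ∞ := by
  by_contra h
  refine not_integrableOn_Ioi_rpow s ⟨by fun_prop, ?_⟩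
  rw [hasFiniteIntegral_iff_ofReal]
  · exact lt_top_iff_ne_top.mpr h
  · filter_upwards [ae_restrict_mem measurableSet_Ioi] with v hv
    exact rpow_nonneg (le_of_lt hv) _

theorem lintegral_Ioi_ofReal_rpow_mul_exp_neg_mul {α z : ℝ} (hα : 0 < α) (hz : 0 < z) :
    ∫⁻ v in Ioi (0 : ℝ), ENNReal.ofReal (v ^ (α - 1) * exp (-(v * z))) =
      ENNReal.ofReal (Gamma α * z ^ (-α)) := by
  have hval : ∫ v in Ioi (0 : ℝ), v ^ (α - 1) * exp (-(v * z)) = Gamma α * z ^ (-α) := by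
    simp_rw [mul_comm _ z]
    rw [integral_rpow_mul_exp_neg_mul_Ioi hα hz, one_div, inv_rpow hz.le, ← rpow_neg hz.le,
      mul_comm]
  have hint : IntegrableOn (fun v : ℝ => v ^ (α - 1) * exp (-(v * z))) (Ioi 0) :=
    .of_integral_ne_zero (by rw [hval]; exact (mul_pos (Gamma_pos_of_pos hα) (by positivity)).ne')
  rw [← hval, ofReal_integral_eq_lintegral_ofReal hint]
  filter_upwards [ae_restrict_mem measurableSet_Ioi] with v hv
  exact mul_nonneg (rpow_nonneg (le_of_lt hv) _) (exp_pos _).le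

theorem integrable_exp_neg_mul_of_nonneg {μ : Measure ℝ} [IsFiniteMeasure μ]
    (hpos : ∀ᵐ z ∂μ, 0 ≤ z) {v : ℝ} (hv : 0 ≤ v) : Integrable (fun z => exp (-(v * z))) μ :=
  Integrable.of_bound (by fun_prop) 1 <| by
    filter_upwards [hpos] with z hz
    rw [norm_of_nonneg (exp_pos _).le, exp_le_one_iff, neg_nonpos]
    exact mul_nonneg hv hz

theorem integral_rpow_neg_eq_integral_laplace {μ : Measure ℝ} [IsFiniteMeasure μ] {α : ℝ}
    (hα : 0 < α) (hpos : ∀ᵐ z ∂μ, 0 ≤ z)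
    (hint : IntegrableOn (fun v => v ^ (α - 1) * ∫ z, exp (-(v * z)) ∂μ) (Ioi 0)) :
    ∫ z, z ^ (-α) ∂μ = (∫ v in Ioi 0, v ^ (α - 1) * ∫ z, exp (-(v * z)) ∂μ) / Gamma α := by
  set K : ℝ → ℝ → ℝ≥0∞ := fun z v => ENNReal.ofReal (v ^ (α - 1) * exp (-(v * z)))
  have hK : Measurable (Function.uncurry K) := by fun_prop
  have h_inner : ∀ v ∈ Ioi (0 : ℝ),
      ∫⁻ z, K z v ∂μ = ENNReal.ofReal (v ^ (α - 1) * ∫ z, exp (-(v * z)) ∂μ) := by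
    intro v hv
    rw [← integral_const_mul, ofReal_integral_eq_lintegral_ofReal
      ((integrable_exp_neg_mul_of_nonneg hpos hv.out.le).const_mul _)]
    exact Eventually.of_forall fun z => mul_nonneg (rpow_nonneg hv.out.le _) (exp_pos _).le
  have h_tonelli : ∫⁻ z, (∫⁻ v in Ioi 0, K z v) ∂μ =
      ENNReal.ofReal (∫ v in Ioi 0, v ^ (α - 1) * ∫ z, exp (-(v * z)) ∂μ) := by
    rw [lintegral_lintegral_swap (ν := volume.restrict (Ioi 0)) hK.aemeasurable,
      setLIntegral_congr_fun measurableSet_Ioi h_inner, ofReal_integral_eq_lintegral_ofReal hint]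
    filter_upwards [ae_restrict_mem measurableSet_Ioi] with v hv
    exact mul_nonneg (rpow_nonneg (le_of_lt hv) _) (integral_nonneg fun z => (exp_pos _).le)
  have hG : Measurable fun z => ∫⁻ v in Ioi 0, K z v := hK.lintegral_prod_right
  have h_ae : (fun z => ∫⁻ v in Ioi 0, K z v) =ᵐ[μ]
      fun z => ENNReal.ofReal (Gamma α * z ^ (-α)) := by
    filter_upwards [hpos, ae_lt_top hG (h_tonelli ▸ ENNReal.ofReal_ne_top)] with z hz hfin
    rcases hz.eq_or_lt with rfl | hz
    · simp [K, lintegral_Ioi_ofReal_rpow_eq_top] at hfin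
    · exact lintegral_Ioi_ofReal_rpow_mul_exp_neg_mul hα hz
  have hΓ := Gamma_pos_of_pos hα
  have h_moment : ENNReal.ofReal (Gamma α) * ∫⁻ z, ENNReal.ofReal (z ^ (-α)) ∂μ =
      ENNReal.ofReal (∫ v in Ioi 0, v ^ (α - 1) * ∫ z, exp (-(v * z)) ∂μ) :=
    calc ENNReal.ofReal (Gamma α) * ∫⁻ z, ENNReal.ofReal (z ^ (-α)) ∂μ
        = ∫⁻ z, ENNReal.ofReal (Gamma α * z ^ (-α)) ∂μ := by
          rw [← lintegral_const_mul' _ _ ENNReal.ofReal_ne_top]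
          simp_rw [ENNReal.ofReal_mul hΓ.le]
      _ = ∫⁻ z, (∫⁻ v in Ioi 0, K z v) ∂μ := (lintegral_congr_ae h_ae).symm
      _ = _ := h_tonelli
  rw [integral_eq_lintegral_of_nonneg_ae
      (by filter_upwards [hpos] with z hz using rpow_nonneg hz _) (by fun_prop),
    (ENNReal.eq_div_iff (by simpa using hΓ) ENNReal.ofReal_ne_top).mpr h_moment,
    ← ENNReal.ofReal_div_of_pos hΓ, ENNReal.toReal_ofReal]
  exact div_nonneg (setIntegral_nonneg measurableSet_Ioi fun v hv =>
    mul_nonneg (rpow_nonneg (le_of_lt hv) _) (integral_nonneg fun z => (exp_pos _).le)) hΓ.le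

section OneAddRpow

variable {c : ℝ}

theorem hasDerivAt_one_add_rpow_div (hc : c ≠ 1) {u : ℝ} (hu : 0 < 1 + u) :
    HasDerivAt (fun u : ℝ => (1 + u) ^ (1 - c) / (1 - c)) ((1 + u) ^ (-c)) u := by
  have h := (((hasDerivAt_id u).const_add 1).rpow_const (p := 1 - c) (Or.inl hu.ne')).div_const
    (1 - c)
  rwa [one_mul, mul_div_cancel_left₀ _ (sub_ne_zero.mpr hc.symm), sub_sub_cancel_left] at h

theorem tendsto_one_add_rpow_div_atTop (hc : 1 < c) :
    Tendsto (fun u : ℝ => (1 + u) ^ (1 - c) / (1 - c)) atTop (𝓝 0) := by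
  have h := (tendsto_rpow_neg_atTop (sub_pos.mpr hc)).comp
    (tendsto_atTop_add_const_left _ 1 tendsto_id)
  simpa [neg_sub] using h.div_const (1 - c)

theorem integrableOn_Ioi_one_add_rpow_neg (hc : 1 < c) :
    IntegrableOn (fun u : ℝ => (1 + u) ^ (-c)) (Ioi 0) :=
  integrableOn_Ioi_deriv_of_nonneg' (fun u hu => hasDerivAt_one_add_rpow_div hc.ne' (by
    linarith [hu.out])) (fun u hu => rpow_nonneg (by linarith [hu.out]) _)
    (tendsto_one_add_rpow_div_atTop hc)

theorem integral_Ioi_one_add_rpow_neg (hc : 1 < c) :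
    ∫ u in Ioi 0, (1 + u) ^ (-c) = (c - 1)⁻¹ := by
  rw [integral_Ioi_of_hasDerivAt_of_tendsto' (fun u hu => hasDerivAt_one_add_rpow_div hc.ne'
    (by linarith [hu.out])) (integrableOn_Ioi_one_add_rpow_neg hc)
    (tendsto_one_add_rpow_div_atTop hc)]
  rw [add_zero, one_rpow, zero_sub, ← div_neg, neg_sub, one_div]

theorem integrableOn_Ioi_rpow_mul_one_add_rpow_neg {α : ℝ} (hα : α ≠ 0) (hc : 1 < c) :
    IntegrableOn (fun v : ℝ => v ^ (α - 1) * (1 + v ^ α) ^ (-c)) (Ioi 0) :=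
  (integrableOn_Ioi_comp_rpow_iff' _ hα).mpr (integrableOn_Ioi_one_add_rpow_neg hc)

theorem integral_Ioi_rpow_mul_one_add_rpow_neg {α : ℝ} (hα : 0 < α) (hc : 1 < c) :
    ∫ v in Ioi 0, v ^ (α - 1) * (1 + v ^ α) ^ (-c) = (α * (c - 1))⁻¹ := by
  have h := integral_comp_rpow_Ioi_of_pos (g := fun u : ℝ => (1 + u) ^ (-c)) hα
  simp only [smul_eq_mul, mul_assoc, integral_const_mul, integral_Ioi_one_add_rpow_neg hc] at h
  rw [mul_inv, ← h, inv_mul_cancel_left₀ hα.ne']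

end OneAddRpow

theorem stmt10_general (α c : ℝ) (hα : 0 < α) (hc : 1 < c)
    (μ : Measure ℝ) [IsProbabilityMeasure μ] (hpos : ∀ᵐ z ∂μ, 0 ≤ z)
    (hLap : ∀ l : ℝ, 0 ≤ l →
      ∫ z, Real.exp (-(l * z)) ∂μ = Real.exp (-(c * Real.log (1 + l ^ α)))) :
    ∫ z, z ^ (-α) ∂μ = 1 / (Real.Gamma (α + 1) * (c - 1)) := by
  have hL : ∀ v ∈ Ioi (0 : ℝ), v ^ (α - 1) * ∫ z, exp (-(v * z)) ∂μ =
      v ^ (α - 1) * (1 + v ^ α) ^ (-c) := fun v (hv : 0 < v) => by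
    rw [hLap v hv.le, rpow_def_of_pos (x := 1 + v ^ α) (by positivity), mul_neg, mul_comm c]
  have hint := (integrableOn_Ioi_rpow_mul_one_add_rpow_neg hα.ne' hc).congr_fun
    (fun v hv => (hL v hv).symm) measurableSet_Ioi
  rw [integral_rpow_neg_eq_integral_laplace hα hpos hint,
    setIntegral_congr_fun measurableSet_Ioi hL, integral_Ioi_rpow_mul_one_add_rpow_neg hα hc,
    Gamma_add_one hα.ne']
  field_simp

theorem stmt10 (α c : ℝ) (hα : 0 < α) (hα1 : α < 1) (hc : 1 < c)
    (μ : Measure ℝ) [IsProbabilityMeasure μ] (hpos : ∀ᵐ z ∂μ, 0 ≤ z)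
    (hLap : ∀ l : ℝ, 0 ≤ l →
      ∫ z, Real.exp (-(l * z)) ∂μ = Real.exp (-(c * Real.log (1 + l ^ α)))) :
    ∫ z, z ^ (-α) ∂μ = 1 / (Real.Gamma (α + 1) * (c - 1)) :=
  stmt10_general α c hα hc μ hpos hLap
end

section
/- Let 0 < α < 1, λ ≥ 0 and let ψ(t,λ) = e^{-t/α}λ/[1+(1−e^{-t})λ^α]^{1/α}. Then d/dt log(1 + ψ(t,λ)^α) = −ψ(t,λ)^α for all t > 0, and consequently ∫₀^∞ ψ(t,λ)^α dt = log(1+λ^α). -/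
/-!
With `c = λ^α` and `D(t) = 1 + (1 - e^{-t}) c` one has `ψ(t)^α = e^{-t} c / D(t) = D'(t) / D(t)`
and `1 + ψ(t)^α = (1 + c) / D(t)`. Hence `log (1 + ψ^α) = log (1 + c) - log D` has derivative
`-ψ^α`, and `∫₀^∞ ψ^α = lim log D - log D(0) = log (1 + c) - log 1`.
-/

open Real Filter Topology MeasureTheory Set

noncomputable def psiDenom (c t : ℝ) : ℝ := 1 + (1 - exp (-t)) * c

noncomputable def psiPow (c t : ℝ) : ℝ := exp (-t) * c / psiDenom c t

lemma rpow_exp_mul_div_rpow_inv {α x D : ℝ} (hα : α ≠ 0) (hx : 0 ≤ x) (hD : 0 ≤ D) (t : ℝ) :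
    (exp (-t / α) * x / D ^ (1 / α)) ^ α = exp (-t) * x ^ α / D := by
  have hexp : exp (-t / α) ^ α = exp (-t) := by
    rw [← exp_mul, div_mul_cancel₀ _ hα]
  rw [div_rpow (by positivity) (by positivity), mul_rpow (exp_pos _).le hx, hexp, one_div,
    rpow_inv_rpow hD hα]

namespace psiDenom

variable {c : ℝ}

lemma pos (hc : 0 ≤ c) {t : ℝ} (ht : 0 ≤ t) : 0 < psiDenom c t := by
  have : exp (-t) ≤ 1 := exp_le_one_iff.mpr (neg_nonpos.mpr ht)
  unfold psiDenom
  nlinarith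

@[simp] lemma zero (c : ℝ) : psiDenom c 0 = 1 := by simp [psiDenom]

lemma hasDerivAt (c t : ℝ) : HasDerivAt (psiDenom c) (exp (-t) * c) t := by
  have h := (((hasDerivAt_neg t).exp.const_sub 1).mul_const c).const_add 1
  unfold psiDenom
  simpa using h

lemma tendsto_atTop (c : ℝ) : Tendsto (psiDenom c) atTop (𝓝 (1 + c)) := by
  have h := (((tendsto_const_nhds (x := (1 : ℝ))).sub tendsto_exp_neg_atTop_nhds_zero).mul
    (tendsto_const_nhds (x := c))).const_add 1
  unfold psiDenom
  simpa using h

end psiDenom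

namespace psiPow

variable {c : ℝ}

lemma nonneg (hc : 0 ≤ c) {t : ℝ} (ht : 0 ≤ t) : 0 ≤ psiPow c t :=
  div_nonneg (mul_nonneg (exp_pos _).le hc) (psiDenom.pos hc ht).le

lemma log_one_add (hc : 0 ≤ c) {t : ℝ} (ht : 0 ≤ t) :
    log (1 + psiPow c t) = log (1 + c) - log (psiDenom c t) := by
  have hD := psiDenom.pos hc ht
  have h : 1 + psiPow c t = (1 + c) / psiDenom c t := by
    rw [psiPow, eq_div_iff hD.ne', add_mul, div_mul_cancel₀ _ hD.ne', psiDenom]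
    ring
  rw [h, log_div (by positivity) hD.ne']

lemma hasDerivAt_log_psiDenom (hc : 0 ≤ c) {t : ℝ} (ht : 0 ≤ t) :
    HasDerivAt (fun s => log (psiDenom c s)) (psiPow c t) t :=
  (psiDenom.hasDerivAt c t).log (psiDenom.pos hc ht).ne'

lemma hasDerivAt_log_one_add (hc : 0 ≤ c) {t : ℝ} (ht : 0 < t) :
    HasDerivAt (fun s => log (1 + psiPow c s)) (-psiPow c t) t := by
  have h := (hasDerivAt_log_psiDenom hc ht.le).const_sub (log (1 + c))
  refine h.congr_of_eventuallyEq ?_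
  filter_upwards [Ioi_mem_nhds ht] with s hs
  exact log_one_add hc (le_of_lt hs)

lemma integral_Ioi (hc : 0 ≤ c) : ∫ t in Ioi (0 : ℝ), psiPow c t = log (1 + c) := by
  have hcont : ContinuousWithinAt (fun s => log (psiDenom c s)) (Ici 0) 0 :=
    (hasDerivAt_log_psiDenom hc le_rfl).continuousAt.continuousWithinAt
  have hlim : Tendsto (fun s => log (psiDenom c s)) atTop (𝓝 (log (1 + c))) :=
    (continuousAt_log (by positivity)).tendsto.comp (psiDenom.tendsto_atTop c)
  rw [integral_Ioi_of_hasDerivAt_of_nonneg hcont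
    (fun t ht => hasDerivAt_log_psiDenom hc (le_of_lt ht)) (fun t ht => nonneg hc (le_of_lt ht))
    hlim]
  simp

end psiPow

theorem stmt12_general (α lam : ℝ) (hα : 0 < α) (hlam : 0 ≤ lam) :
    let ψ : ℝ → ℝ := fun t =>
      Real.exp (-t / α) * lam / (1 + (1 - Real.exp (-t)) * lam ^ α) ^ (1 / α)
    (∀ t > (0:ℝ),
      HasDerivAt (fun s => Real.log (1 + ψ s ^ α)) (-(ψ t ^ α)) t) ∧
    ∫ t in Set.Ioi (0:ℝ), ψ t ^ α = Real.log (1 + lam ^ α) := by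
  intro ψ
  have hc : 0 ≤ lam ^ α := rpow_nonneg hlam α
  have hψ : ∀ t, 0 ≤ t → ψ t ^ α = psiPow (lam ^ α) t := fun t ht =>
    rpow_exp_mul_div_rpow_inv hα.ne' hlam (psiDenom.pos hc ht).le t
  refine ⟨fun t ht => ?_, ?_⟩
  · rw [hψ t ht.le]
    refine (psiPow.hasDerivAt_log_one_add hc ht).congr_of_eventuallyEq ?_
    filter_upwards [Ioi_mem_nhds ht] with s hs
    rw [hψ s (le_of_lt hs)]
  · rw [setIntegral_congr_fun measurableSet_Ioi fun t ht => hψ t (le_of_lt ht)]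
    exact psiPow.integral_Ioi hc

theorem stmt12 (α lam : ℝ) (hα : 0 < α) (hα1 : α < 1) (hlam : 0 ≤ lam) :
    let ψ : ℝ → ℝ := fun t =>
      Real.exp (-t / α) * lam / (1 + (1 - Real.exp (-t)) * lam ^ α) ^ (1 / α)
    (∀ t > (0:ℝ),
      HasDerivAt (fun s => Real.log (1 + ψ s ^ α)) (-(ψ t ^ α)) t) ∧
    ∫ t in Set.Ioi (0:ℝ), ψ t ^ α = Real.log (1 + lam ^ α) :=
  stmt12_general α lam hα hlam
end

section
/- For 0 < α < 1 and positive integer n, the constants in the n-particle generator expansion satisfy Σ_{k=2}^n C(n,k)(1-α)_{k-2}(α+1)_{n-k} = (α+1)_{n-1}·(n-1)/(α+1)·Γ(n)/Γ(n) in the sense that the total jump rate identity Σ_{k=2}^n C(n,k)(1-α)_{k-2}(α+1)_{n-k} + (θ/(α+1))Σ_{k=1}^n C(n,k)(1-α)_{k-1}(α)_{n-k} = ((α+1)_{n-1}/(α+1))(θ+n−1) holds for all θ ≥ 0, where (a)_b = Γ(a+b)/Γ(a) is the Pochhammer symbol. -/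
/-!
Chu–Vandermonde for rising factorials with `x = -a`, `y = a` gives
`∑ₖ C(n,k) (-a)ₖ (a)ₙ₋ₖ = (0)ₙ = 0` for `n ≥ 1`. Since `(-a)ₖ = -a (1-a)ₖ₋₁`, splitting off the
term `k = 0` evaluates the `θ`-sum (take `a = α`); since `(-a-1)ₖ = a (a+1) (1-a)ₖ₋₂`, splitting
off `k = 0, 1` from the same identity for `a + 1` evaluates the other sum.
-/

/-- Rising factorial (Pochhammer) `(a)_b = Γ(a+b)/Γ(a)`. -/
noncomputable def poch (a : ℝ) (b : ℕ) : ℝ := Real.Gamma (a + b) / Real.Gamma a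

open Polynomial Finset

theorem Finset.sum_Icc_eq_add_sum_Icc_succ {M : Type*} [AddCommMonoid M] (f : ℕ → M) {a b : ℕ}
    (hab : a ≤ b) : ∑ k ∈ Icc a b, f k = f a + ∑ k ∈ Icc (a + 1) b, f k := by
  rw [← add_sum_Ioc_eq_sum_Icc hab, Icc_add_one_left_eq_Ioc]

section ChuVandermonde

variable {R : Type*} [CommRing R]

theorem descPochhammer_smeval_eq_eval (r : R) (n : ℕ) :
    (descPochhammer ℤ n).smeval r = (descPochhammer R n).eval r := by
  rw [← aeval_eq_smeval, aeval_def, ← eval_map, ← descPochhammer_map (algebraMap ℤ R)]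

/-- Deduced from the descending version `Ring.descPochhammer_smeval_add` through
`(x)ₖ = (-1)ᵏ (-x)(-x-1)⋯(-x-k+1)`. -/
theorem ascPochhammer_eval_add (x y : R) (n : ℕ) :
    (ascPochhammer R n).eval (x + y) = ∑ ij ∈ antidiagonal n,
      n.choose ij.1 * ((ascPochhammer R ij.1).eval x * (ascPochhammer R ij.2).eval y) := by
  have asc_eq_desc (k : ℕ) (r : R) :
      (ascPochhammer R k).eval r = (-1) ^ k * (descPochhammer ℤ k).smeval (-r) := by
    simpa [descPochhammer_smeval_eq_eval] using ascPochhammer_eval_neg_eq_descPochhammer R (-r) k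
  simp_rw [asc_eq_desc]
  rw [neg_add, Ring.descPochhammer_smeval_add _ (Commute.all (-x) (-y)), mul_sum]
  refine sum_congr rfl fun ij hij => ?_
  rw [← mem_antidiagonal.mp hij, pow_add]
  ring

theorem ascPochhammer_eval_succ_left (r : R) (n : ℕ) :
    (ascPochhammer R (n + 1)).eval r = r * (ascPochhammer R n).eval (r + 1) := by
  simp [ascPochhammer_succ_left]

theorem sum_Icc_choose_mul_ascPochhammer_eval_neg_mul_eval_eq_zero (a : R) {n : ℕ}
    (hn : n ≠ 0) :
    ∑ k ∈ Icc 0 n,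
      (n.choose k : R) * (ascPochhammer R k).eval (-a) * (ascPochhammer R (n - k)).eval a = 0 := by
  have h := ascPochhammer_eval_add (-a) a n
  rw [neg_add_cancel, ascPochhammer_ne_zero_eval_zero R hn,
    Nat.sum_antidiagonal_eq_sum_range_succ_mk, Nat.range_succ_eq_Icc_zero] at h
  simpa only [mul_assoc] using h.symm

end ChuVandermonde

section

variable {K : Type*} [Field K]

theorem sum_Icc_one_choose_mul_ascPochhammer_eval_one_sub {a : K} (ha : a ≠ 0) {n : ℕ}
    (hn : n ≠ 0) :
    ∑ k ∈ Icc 1 n, (n.choose k : K) * (ascPochhammer K (k - 1)).eval (1 - a)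
        * (ascPochhammer K (n - k)).eval a = (ascPochhammer K (n - 1)).eval (a + 1) := by
  obtain ⟨m, rfl⟩ := Nat.exists_eq_add_of_le' (Nat.one_le_iff_ne_zero.mpr hn)
  have h := sum_Icc_choose_mul_ascPochhammer_eval_neg_mul_eval_eq_zero a hn
  have term_eq : ∀ k ∈ Icc 1 (m + 1), ((m + 1).choose k : K) * (ascPochhammer K k).eval (-a)
      * (ascPochhammer K (m + 1 - k)).eval a = -a * (((m + 1).choose k : K) *
        (ascPochhammer K (k - 1)).eval (1 - a) * (ascPochhammer K (m + 1 - k)).eval a) := by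
    intro k hk
    obtain ⟨j, rfl⟩ := Nat.exists_eq_add_of_le' (mem_Icc.mp hk).1
    rw [ascPochhammer_eval_succ_left, Nat.add_sub_cancel, neg_add_eq_sub]
    ring
  rw [sum_Icc_eq_add_sum_Icc_succ _ (Nat.zero_le _), zero_add, sum_congr rfl term_eq, ← mul_sum,
    Nat.choose_zero_right, Nat.cast_one, ascPochhammer_zero, eval_one, Nat.sub_zero,
    ascPochhammer_eval_succ_left] at h
  rw [Nat.add_sub_cancel]
  apply mul_left_cancel₀ ha
  linear_combination -h

theorem sum_Icc_two_choose_mul_ascPochhammer_eval_one_sub {a : K} (ha : a ≠ 0) (ha' : a + 1 ≠ 0)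
    {n : ℕ} (hn : n ≠ 0) :
    ∑ k ∈ Icc 2 n, (n.choose k : K) * (ascPochhammer K (k - 2)).eval (1 - a)
        * (ascPochhammer K (n - k)).eval (a + 1)
      = (ascPochhammer K (n - 1)).eval (a + 1) * (n - 1) / (a + 1) := by
  obtain ⟨m, rfl⟩ := Nat.exists_eq_add_of_le' (Nat.one_le_iff_ne_zero.mpr hn)
  have h := sum_Icc_choose_mul_ascPochhammer_eval_neg_mul_eval_eq_zero (a + 1) hn
  have term_eq : ∀ k ∈ Icc 2 (m + 1),
      ((m + 1).choose k : K) * (ascPochhammer K k).eval (-(a + 1))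
        * (ascPochhammer K (m + 1 - k)).eval (a + 1) = a * (a + 1) * (((m + 1).choose k : K) *
          (ascPochhammer K (k - 2)).eval (1 - a) * (ascPochhammer K (m + 1 - k)).eval (a + 1)) := by
    intro k hk
    obtain ⟨j, rfl⟩ := Nat.exists_eq_add_of_le' (mem_Icc.mp hk).1
    rw [ascPochhammer_eval_succ_left, ascPochhammer_eval_succ_left, Nat.add_sub_cancel,
      show -(a + 1) + 1 + 1 = 1 - a by ring]
    ring
  rw [sum_Icc_eq_add_sum_Icc_succ _ (Nat.zero_le _), zero_add,
    sum_Icc_eq_add_sum_Icc_succ _ (Nat.le_add_left 1 m), one_add_one_eq_two,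
    sum_congr rfl term_eq, ← mul_sum, Nat.choose_zero_right, Nat.choose_one_right,
    ascPochhammer_zero, ascPochhammer_one, eval_one, eval_X, Nat.sub_zero, Nat.add_sub_cancel,
    ascPochhammer_succ_eval] at h
  rw [Nat.add_sub_cancel, eq_div_iff ha', ← mul_right_inj' ha]
  push_cast at h ⊢
  linear_combination h

end

theorem poch_eq_eval_ascPochhammer {a : ℝ} (ha : ∀ m : ℕ, a ≠ -m) (b : ℕ) :
    poch a b = (ascPochhammer ℝ b).eval a := by
  induction b with
  | zero => simp [poch, Real.Gamma_ne_zero ha]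
  | succ b ih =>
    have hab : a + b ≠ 0 := fun h => ha b (eq_neg_of_add_eq_zero_left h)
    rw [poch, Nat.cast_succ, ← add_assoc, Real.Gamma_add_one hab, ascPochhammer_succ_eval, ← ih,
      poch]
    ring

theorem stmt16_general (α : ℝ) (hα : 0 < α) (hα1 : α < 1) (n : ℕ) (hn : 1 ≤ n) (θ : ℝ) :
    (∑ k ∈ Finset.Icc 2 n, (n.choose k : ℝ) * poch (1 - α) (k - 2) * poch (α + 1) (n - k))
      + (θ / (α + 1)) * ∑ k ∈ Finset.Icc 1 n,
          (n.choose k : ℝ) * poch (1 - α) (k - 1) * poch α (n - k)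
      = (poch (α + 1) (n - 1) / (α + 1)) * (θ + n - 1) := by
  have poch_eq {a : ℝ} (ha : 0 < a) (b : ℕ) : poch a b = (ascPochhammer ℝ b).eval a :=
    poch_eq_eval_ascPochhammer (fun m => ((neg_nonpos.mpr m.cast_nonneg).trans_lt ha).ne') b
  have hn : n ≠ 0 := Nat.one_le_iff_ne_zero.mp hn
  simp only [poch_eq (sub_pos.mpr hα1), poch_eq (by positivity : 0 < α + 1), poch_eq hα]
  rw [sum_Icc_two_choose_mul_ascPochhammer_eval_one_sub hα.ne' (by positivity) hn,
    sum_Icc_one_choose_mul_ascPochhammer_eval_one_sub hα.ne' hn]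
  ring

theorem stmt16 (α : ℝ) (hα : 0 < α) (hα1 : α < 1) (n : ℕ) (hn : 1 ≤ n) (θ : ℝ)
    (hθ : 0 ≤ θ) :
    (∑ k ∈ Finset.Icc 2 n, (n.choose k : ℝ) * poch (1 - α) (k - 2) * poch (α + 1) (n - k))
      + (θ / (α + 1)) * ∑ k ∈ Finset.Icc 1 n,
          (n.choose k : ℝ) * poch (1 - α) (k - 1) * poch α (n - k)
      = (poch (α + 1) (n - 1) / (α + 1)) * (θ + n - 1) :=
  stmt16_general α hα hα1 n hn θ
end

section
/- Let 0 < α < 1, θ > 0, and suppose a probability measure P on [0,1] satisfies, for all n ≥ 1, the moment recursion obtained from stationarity: ((α+1)_{n-1}/(α+1))(θ+n−1)·m_n = Γ(n)^{-1}Σ_{k=2}^n C(n,k)(1-α)_{k-2}(α+1)_{n-k} m_{n-k+1} + (θ/((α+1)Γ(n)))Σ_{k=1}^n C(n,k)(1-α)_{k-1}(α)_{n-k} y^k m_{n-k}, where m_n = ∫ x^n P(dx), m_0 = 1, and y ∈ [0,1] is fixed. Then the moments m_n are uniquely determined by y, α, θ; hence at most one probability measure on [0,1] satisfies this recursion. 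-/
open MeasureTheory

/-- The stationarity moment recursion for the moments of a probability measure `P`
on `[0,1]`, for the one-dimensional generalized Fleming–Viot generator with
mutation measure `θ·(y δ₁ + (1-y) δ₀)`. -/
def momentRecursion (α θ y : ℝ) (P : Measure ℝ) : Prop :=
  ∀ n : ℕ, 1 ≤ n →
    (poch (α + 1) (n - 1) / (α + 1)) * (θ + n - 1) * (∫ x, x ^ n ∂P)
      = (1 / Real.Gamma n) * ∑ k ∈ Finset.Icc 2 n,
          (n.choose k : ℝ) * poch (1 - α) (k - 2) * poch (α + 1) (n - k)
            * (∫ x, x ^ (n - k + 1) ∂P)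
        + (θ / ((α + 1) * Real.Gamma n)) * ∑ k ∈ Finset.Icc 1 n,
            (n.choose k : ℝ) * poch (1 - α) (k - 1) * poch α (n - k) * y ^ k
              * (∫ x, x ^ (n - k) ∂P)

/-!
The left-hand side of the recursion at `n` is a nonzero multiple of the `n`-th moment, while the
right-hand side only involves moments of order `n - k + 1 < n` and `n - k < n`; so by strong
induction the recursion determines every moment from `m₀`. A finite measure carried by a compact
interval is determined by its moments, since by Weierstrass' theorem polynomials are uniformly
dense in the continuous functions on the interval.
-/

open Polynomial

lemma poch_pos {a : ℝ} (ha : 0 < a) (n : ℕ) : 0 < poch a n :=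
  div_pos (Real.Gamma_pos_of_pos (by positivity)) (Real.Gamma_pos_of_pos ha)

namespace momentRecursion

variable {α θ y : ℝ} {P P' : Measure ℝ}

lemma leadingCoeff_pos (hα : -1 < α) (hθ : 0 < θ) {n : ℕ} (hn : 1 ≤ n) :
    0 < poch (α + 1) (n - 1) / (α + 1) * (θ + n - 1) := by
  have hn' : (1 : ℝ) ≤ n := Nat.one_le_cast.mpr hn
  exact mul_pos (div_pos (poch_pos (by linarith) _) (by linarith)) (by linarith)

theorem integral_pow_eq (hrec : momentRecursion α θ y P) (hrec' : momentRecursion α θ y P')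
    (hα : -1 < α) (hθ : 0 < θ) (h₀ : P.real Set.univ = P'.real Set.univ) (n : ℕ) :
    ∫ x, x ^ n ∂P = ∫ x, x ^ n ∂P' := by
  induction n using Nat.strong_induction_on with
  | _ n ih =>
    rcases Nat.eq_zero_or_pos n with rfl | hn
    · simpa using h₀
    refine mul_left_cancel₀ (leadingCoeff_pos hα hθ hn).ne' ?_
    rw [hrec n hn, hrec' n hn]
    congr 2 <;> refine Finset.sum_congr rfl fun k hk => ?_ <;> rw [ih _ (by grind)]

end momentRecursion

section MomentProblem

variable {μ ν : Measure ℝ} {a b : ℝ}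

lemma Continuous.integrable_of_ae_mem_isCompact [IsFiniteMeasure μ] {g : ℝ → ℝ}
    (hg : Continuous g) {K : Set ℝ} (hK : IsCompact K) (hμ : ∀ᵐ x ∂μ, x ∈ K) :
    Integrable g μ := by
  rw [← Measure.restrict_eq_self_of_ae_mem hμ]
  exact hg.continuousOn.integrableOn_compact hK

lemma integral_eval_eq_of_moments_eq [IsFiniteMeasure μ] [IsFiniteMeasure ν]
    (hμ : ∀ᵐ x ∂μ, x ∈ Set.Icc a b) (hν : ∀ᵐ x ∂ν, x ∈ Set.Icc a b)
    (h : ∀ n : ℕ, ∫ x, x ^ n ∂μ = ∫ x, x ^ n ∂ν) (p : ℝ[X]) :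
    ∫ x, p.eval x ∂μ = ∫ x, p.eval x ∂ν := by
  have integral_eval (ρ : Measure ℝ) [IsFiniteMeasure ρ] (hρ : ∀ᵐ x ∂ρ, x ∈ Set.Icc a b) :
      ∫ x, p.eval x ∂ρ = ∑ i ∈ Finset.range (p.natDegree + 1), p.coeff i * ∫ x, x ^ i ∂ρ := by
    simp_rw [eval_eq_sum_range, ← integral_const_mul]
    exact integral_finsetSum _ fun i _ =>
      ((continuous_pow i).integrable_of_ae_mem_isCompact isCompact_Icc hρ).const_mul _
  simp only [integral_eval μ hμ, integral_eval ν hν, h]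

lemma dist_integral_le_of_ae_mem [IsFiniteMeasure μ] {s : Set ℝ} (hμ : ∀ᵐ x ∂μ, x ∈ s)
    {f g : ℝ → ℝ} (hf : Integrable f μ) (hg : Integrable g μ) {δ : ℝ}
    (hfg : ∀ x ∈ s, |f x - g x| ≤ δ) :
    dist (∫ x, f x ∂μ) (∫ x, g x ∂μ) ≤ δ * μ.real Set.univ := by
  rw [dist_eq_norm, ← integral_sub hf hg]
  refine norm_integral_le_of_norm_le_const ?_
  filter_upwards [hμ] with x hx using hfg x hx

lemma integral_eq_of_moments_eq [IsFiniteMeasure μ] [IsFiniteMeasure ν]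
    (hμ : ∀ᵐ x ∂μ, x ∈ Set.Icc a b) (hν : ∀ᵐ x ∂ν, x ∈ Set.Icc a b)
    (h : ∀ n : ℕ, ∫ x, x ^ n ∂μ = ∫ x, x ^ n ∂ν) {g : ℝ → ℝ} (hg : Continuous g) :
    ∫ x, g x ∂μ = ∫ x, g x ∂ν := by
  refine eq_of_forall_dist_le fun ε hε => ?_
  set C := μ.real Set.univ + ν.real Set.univ
  have hC : 0 ≤ C := by positivity
  obtain ⟨p, hp⟩ := exists_polynomial_near_of_continuousOn a b g hg.continuousOn
    (ε / (C + 1)) (by positivity)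
  have hpg : ∀ x ∈ Set.Icc a b, |g x - p.eval x| ≤ ε / (C + 1) := fun x hx =>
    abs_sub_comm (p.eval x) (g x) ▸ (hp x hx).le
  have hμp := dist_integral_le_of_ae_mem hμ
    (hg.integrable_of_ae_mem_isCompact isCompact_Icc hμ)
    (p.continuous.integrable_of_ae_mem_isCompact isCompact_Icc hμ) hpg
  have hνp := dist_integral_le_of_ae_mem hν
    (hg.integrable_of_ae_mem_isCompact isCompact_Icc hν)
    (p.continuous.integrable_of_ae_mem_isCompact isCompact_Icc hν) hpg
  calc dist (∫ x, g x ∂μ) (∫ x, g x ∂ν)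
      ≤ dist (∫ x, g x ∂μ) (∫ x, p.eval x ∂μ) + dist (∫ x, g x ∂ν) (∫ x, p.eval x ∂ν) := by
        rw [integral_eval_eq_of_moments_eq hμ hν h p]
        exact dist_triangle_right _ _ _
    _ ≤ ε / (C + 1) * C := by rw [mul_add]; exact add_le_add hμp hνp
    _ ≤ ε := by
        rw [div_mul_eq_mul_div, div_le_iff₀ (by positivity)]
        nlinarith

theorem Measure.ext_of_moments_eq_of_ae_mem_Icc [IsFiniteMeasure μ] [IsFiniteMeasure ν]
    (hμ : ∀ᵐ x ∂μ, x ∈ Set.Icc a b) (hν : ∀ᵐ x ∂ν, x ∈ Set.Icc a b)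
    (h : ∀ n : ℕ, ∫ x, x ^ n ∂μ = ∫ x, x ^ n ∂ν) : μ = ν :=
  ext_of_forall_integral_eq_of_IsFiniteMeasure fun f =>
    integral_eq_of_moments_eq hμ hν h f.continuous

end MomentProblem

theorem stmt17_general (α θ y : ℝ) (hα : 0 < α) (hθ : 0 < θ)
    (P P' : Measure ℝ) [IsProbabilityMeasure P] [IsProbabilityMeasure P']
    (hP : ∀ᵐ x ∂P, x ∈ Set.Icc (0:ℝ) 1) (hP' : ∀ᵐ x ∂P', x ∈ Set.Icc (0:ℝ) 1)
    (hrec : momentRecursion α θ y P) (hrec' : momentRecursion α θ y P') :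
    (∀ n : ℕ, ∫ x, x ^ n ∂P = ∫ x, x ^ n ∂P') ∧ P = P' := by
  have hmoments := hrec.integral_pow_eq hrec' (by linarith) hθ (by simp)
  exact ⟨hmoments, Measure.ext_of_moments_eq_of_ae_mem_Icc hP hP' hmoments⟩

theorem stmt17 (α θ y : ℝ) (hα : 0 < α) (hα1 : α < 1) (hθ : 0 < θ)
    (hy : y ∈ Set.Icc (0:ℝ) 1)
    (P P' : Measure ℝ) [IsProbabilityMeasure P] [IsProbabilityMeasure P']
    (hP : ∀ᵐ x ∂P, x ∈ Set.Icc (0:ℝ) 1) (hP' : ∀ᵐ x ∂P', x ∈ Set.Icc (0:ℝ) 1)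
    (hrec : momentRecursion α θ y P) (hrec' : momentRecursion α θ y P') :
    (∀ n : ℕ, ∫ x, x ^ n ∂P = ∫ x, x ^ n ∂P') ∧ P = P' :=
  stmt17_general α θ y hα hθ P P' hP hP' hrec hrec'
end
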